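/- arXiv:0907.4947 — 8 statements merged into one kernel-verified Lean document; each statement's English description precedes it below -/
import Mathlib

section
/- Define g(s) := ∫₀¹ f(x,s) dx. Then g(0) = 0, the map s ↦ g(s)/s is decreasing in s > 0, g(s) ≤ 0 for all s ≥ M, lim_{s→0⁺} g(s)/s = ∫₀¹ μ(x) dx > 0, and g admits a unique positive zero, denoted p₀. -/
open MeasureTheory Filter Topology Set

/-!
Averaging in `x` preserves each property that holds pointwise: strict monotonicity of
`s ↦ f x s / s` and the sign for `s ≥ M` pass to the integral directly, and the limit at `0⁺`
passes by dominated convergence, since for `0 < s ≤ 1` the quotient `f x s / s` lies between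
`f x 1` and `μ x`. The function `μ` is integrable because it is the partial derivative
`∂ₛf(x, 0)` of a `C¹` function. Finally `g` is positive near `0⁺` and nonpositive beyond `M`,
so it vanishes somewhere by the intermediate value theorem, and only once because `g(s)/s` is
injective on `(0, ∞)`.
-/

theorem intervalIntegral.integral_nonpos {f : ℝ → ℝ} {a b : ℝ} (hab : a ≤ b)
    (hf : ∀ u ∈ Icc a b, f u ≤ 0) : ∫ u in a..b, f u ≤ 0 := by
  simpa [intervalIntegral.integral_neg] using
    intervalIntegral.integral_nonneg hab fun u hu => neg_nonneg.mpr (hf u hu)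

theorem StrictAntiOn.intervalIntegral {φ : ℝ → ℝ → ℝ} {S : Set ℝ} {a b : ℝ} (hab : a < b)
    (hint : ∀ s ∈ S, IntervalIntegrable (fun x => φ x s) volume a b)
    (hanti : ∀ x ∈ Ioo a b, StrictAntiOn (φ x) S) :
    StrictAntiOn (fun s => ∫ x in a..b, φ x s) S := by
  intro s hs t ht hst
  have hpos : 0 < ∫ x in a..b, (φ x s - φ x t) :=
    intervalIntegral.intervalIntegral_pos_of_pos_on ((hint s hs).sub (hint t ht))
      (fun x hx => sub_pos.mpr (hanti x hx hs ht hst)) hab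
  rwa [intervalIntegral.integral_sub (hint s hs) (hint t ht), sub_pos] at hpos

theorem tendsto_div_nhdsGT_zero_of_hasDerivAt {φ : ℝ → ℝ} {d : ℝ} (hφ : HasDerivAt φ d 0)
    (h0 : φ 0 = 0) : Tendsto (fun s => φ s / s) (𝓝[>] 0) (𝓝 d) := by
  simpa [h0, div_eq_inv_mul] using hφ.tendsto_slope_zero_right

section Uncurried

variable {f : ℝ → ℝ → ℝ}

theorem continuous_of_tendsto_div_nhdsGT_zero (hf : ContDiff ℝ 1 (Function.uncurry f))
    (h0 : ∀ x, f x 0 = 0) {μ : ℝ → ℝ}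
    (hμ : ∀ x, Tendsto (fun s => f x s / s) (𝓝[>] 0) (𝓝 (μ x))) : Continuous μ := by
  set D := fderiv ℝ (Function.uncurry f)
  have hderiv : ∀ x, HasDerivAt (f x) (D (x, 0) (0, 1)) 0 := fun x =>
    ((hf.differentiable one_ne_zero) (x, 0)).hasFDerivAt.comp_hasDerivAt 0
      ((hasDerivAt_const 0 x).prodMk (hasDerivAt_id 0))
  have hμ_eq : μ = fun x => D (x, 0) (0, 1) := funext fun x =>
    tendsto_nhds_unique (hμ x) (tendsto_div_nhdsGT_zero_of_hasDerivAt (hderiv x) (h0 x))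
  rw [hμ_eq]
  exact ((hf.continuous_fderiv one_ne_zero).comp (by fun_prop)).clm_apply continuous_const

theorem tendsto_intervalIntegral_div_nhdsGT_zero {μ : ℝ → ℝ} {a b : ℝ}
    (hf : ∀ s, Continuous (f · s)) (hμ_cont : Continuous μ)
    (hanti : ∀ x, StrictAntiOn (fun s => f x s / s) (Ioi 0))
    (hμ : ∀ x, Tendsto (fun s => f x s / s) (𝓝[>] 0) (𝓝 (μ x))) :
    Tendsto (fun s => (∫ x in a..b, f x s) / s) (𝓝[>] 0) (𝓝 (∫ x in a..b, μ x)) := by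
  simp_rw [← intervalIntegral.integral_div]
  refine intervalIntegral.tendsto_integral_filter_of_dominated_convergence
    (fun x => max |f x 1| |μ x|) (.of_forall fun s => ((hf s).div_const s).aestronglyMeasurable)
    ?_ (((hf 1).abs.max hμ_cont.abs).intervalIntegrable a b) (.of_forall fun x _ => hμ x)
  filter_upwards [Ioc_mem_nhdsGT zero_lt_one] with s ⟨hs, hs1⟩
  refine .of_forall fun x _ => abs_le_max_abs_abs ?_ ?_
  · simpa using (hanti x).antitoneOn hs (mem_Ioi.mpr one_pos) hs1
  · refine ge_of_tendsto (hμ x) ?_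
    filter_upwards [Ioo_mem_nhdsGT hs] with t ⟨ht, hts⟩
    exact (hanti x ht hs hts).le

end Uncurried

theorem existsUnique_pos_eq_zero_of_strictAntiOn_div {g : ℝ → ℝ} {L M : ℝ}
    (hg : ContinuousOn g (Ioi 0)) (hanti : StrictAntiOn (fun s => g s / s) (Ioi 0))
    (hlim : Tendsto (fun s => g s / s) (𝓝[>] 0) (𝓝 L)) (hL : 0 < L)
    (hM : ∀ s, M ≤ s → g s ≤ 0) : ∃! p, 0 < p ∧ g p = 0 := by
  obtain ⟨ε, hgε, hε⟩ :=
    ((hlim.eventually (eventually_gt_nhds hL)).and self_mem_nhdsWithin).exists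
  have hε : 0 < ε := hε
  obtain ⟨p, hp, hgp⟩ : ∃ p ∈ Icc ε (max ε M), g p = 0 :=
    intermediate_value_Icc' (le_max_left ε M)
      (hg.mono fun s hs => lt_of_lt_of_le hε hs.1)
      ⟨hM _ (le_max_right ε M), (div_pos_iff_of_pos_right hε).mp hgε |>.le⟩
  have hp_pos : 0 < p := hε.trans_le hp.1
  refine ⟨p, ⟨hp_pos, hgp⟩, fun q ⟨hq, hgq⟩ => hanti.injOn hq hp_pos ?_⟩
  simp only [hgq, hgp, zero_div]

theorem homogenized_nonlinearity_properties_general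
    (f : ℝ → ℝ → ℝ) (μ : ℝ → ℝ) (M : ℝ)
    (hf_C1 : ContDiff ℝ 1 (fun q : ℝ × ℝ => f q.1 q.2))
    (hf_zero : ∀ x, f x 0 = 0)
    (hf_M : ∀ x s, M ≤ s → f x s ≤ 0)
    (hf_dec : ∀ x, StrictAntiOn (fun s => f x s / s) (Set.Ioi 0))
    (hμ : ∀ x, Tendsto (fun s => f x s / s) (𝓝[>] (0:ℝ)) (𝓝 (μ x)))
    (hμ_pos : 0 < ∫ x in (0:ℝ)..1, μ x) :
    (∫ x in (0:ℝ)..1, f x 0) = 0 ∧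
    StrictAntiOn (fun s => (∫ x in (0:ℝ)..1, f x s) / s) (Set.Ioi 0) ∧
    (∀ s, M ≤ s → (∫ x in (0:ℝ)..1, f x s) ≤ 0) ∧
    Tendsto (fun s => (∫ x in (0:ℝ)..1, f x s) / s) (𝓝[>] (0:ℝ))
      (𝓝 (∫ x in (0:ℝ)..1, μ x)) ∧
    (0 < ∫ x in (0:ℝ)..1, μ x) ∧
    (∃! p₀ : ℝ, 0 < p₀ ∧ (∫ x in (0:ℝ)..1, f x p₀) = 0) := by
  have hcont : Continuous (Function.uncurry f) := hf_C1.continuous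
  have hcont_x : ∀ s, Continuous (f · s) := fun s =>
    hcont.comp (continuous_id.prodMk continuous_const)
  have hanti : StrictAntiOn (fun s => (∫ x in (0:ℝ)..1, f x s) / s) (Ioi 0) := by
    simp_rw [← intervalIntegral.integral_div]
    exact StrictAntiOn.intervalIntegral zero_lt_one
      (fun s _ => ((hcont_x s).div_const s).intervalIntegrable 0 1) fun x _ => hf_dec x
  have hnonpos : ∀ s, M ≤ s → (∫ x in (0:ℝ)..1, f x s) ≤ 0 := fun s hs =>
    intervalIntegral.integral_nonpos zero_le_one fun x _ => hf_M x s hs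
  have hlim := tendsto_intervalIntegral_div_nhdsGT_zero (a := 0) (b := 1) hcont_x
    (continuous_of_tendsto_div_nhdsGT_zero hf_C1 hf_zero hμ) hf_dec hμ
  have hg_cont : Continuous fun s => ∫ x in (0:ℝ)..1, f x s :=
    intervalIntegral.continuous_parametric_intervalIntegral_of_continuous'
      (f := fun s x => f x s) (hcont.comp continuous_swap) 0 1
  exact ⟨by simp [hf_zero], hanti, hnonpos, hlim, hμ_pos,
    existsUnique_pos_eq_zero_of_strictAntiOn_div hg_cont.continuousOn hanti hlim hμ_pos hnonpos⟩

/-- Define `g(s) := ∫₀¹ f(x,s) dx`. Then `g(0) = 0`, `s ↦ g(s)/s` is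
decreasing in `s > 0`, `g(s) ≤ 0` for `s ≥ M`, `lim_{s→0⁺} g(s)/s = ∫₀¹ μ > 0`, and
`g` admits a unique positive zero `p₀`. -/
theorem homogenized_nonlinearity_properties
    (f : ℝ → ℝ → ℝ) (μ : ℝ → ℝ) (M : ℝ)
    (hf_per : ∀ x s, f (x + 1) s = f x s)
    (hf_C1 : ContDiff ℝ 1 (fun q : ℝ × ℝ => f q.1 q.2))
    (hf_zero : ∀ x, f x 0 = 0)
    (hM : 0 ≤ M)
    (hf_M : ∀ x s, M ≤ s → f x s ≤ 0)
    (hf_dec : ∀ x, StrictAntiOn (fun s => f x s / s) (Set.Ioi 0))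
    (hμ : ∀ x, Tendsto (fun s => f x s / s) (𝓝[>] (0:ℝ)) (𝓝 (μ x)))
    (hμ_pos : 0 < ∫ x in (0:ℝ)..1, μ x) :
    (∫ x in (0:ℝ)..1, f x 0) = 0 ∧
    StrictAntiOn (fun s => (∫ x in (0:ℝ)..1, f x s) / s) (Set.Ioi 0) ∧
    (∀ s, M ≤ s → (∫ x in (0:ℝ)..1, f x s) ≤ 0) ∧
    Tendsto (fun s => (∫ x in (0:ℝ)..1, f x s) / s) (𝓝[>] (0:ℝ))
      (𝓝 (∫ x in (0:ℝ)..1, μ x)) ∧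
    (0 < ∫ x in (0:ℝ)..1, μ x) ∧
    (∃! p₀ : ℝ, 0 < p₀ ∧ (∫ x in (0:ℝ)..1, f x p₀) = 0) :=
  homogenized_nonlinearity_properties_general f μ M hf_C1 hf_zero hf_M hf_dec hμ hμ_pos
end

section
/- Let h : ℝ → ℝ be a continuous 1-periodic function and let (L_n) be a sequence of positive reals with L_n → 0. Then for every continuous compactly supported φ : ℝ → ℝ, ∫_ℝ h(x/L_n) φ(x) dx → (∫₀¹ h(y) dy) · (∫_ℝ φ(x) dx) as n → ∞ (i.e. the rescaled periodic functions x ↦ h(x/L_n) converge to their mean in the weak-* sense of L^∞). -/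
/-!
Write `g = h - ∫₀¹ h`, a periodic function of mean zero, and `I(l) = ∫ g(x/l) φ(x) dx`.
Shifting `x` by `l t` gives `I(l) = ∫ g(x/l + t) φ(x + l t) dx` for every `t`, while by Fubini
and the zero mean, `J(t) = ∫ g(x/l + t) φ(x) dx` has `∫₀¹ J = 0`. Averaging `I(l) - J(t)` over
`t ∈ [0, 1]` therefore bounds `|I(l)|` by `sup |g|` times the average over `t` of
`‖φ(· + l t) - φ‖₁`, which tends to `0` with `l` by the continuity of translations in `L¹`.
This works for every integrable `φ`.
-/

open MeasureTheory Filter Topology Function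

theorem continuous_integral_norm_add_sub {G E : Type*} [AddGroup G] [TopologicalSpace G]
    [IsTopologicalAddGroup G] [MeasurableSpace G] [BorelSpace G] {μ : Measure G}
    [μ.IsAddLeftInvariant] [IsLocallyFiniteMeasure μ] [μ.InnerRegularCompactLTTop]
    [NormedAddCommGroup E] {φ : G → E} (hφ : Integrable φ μ) :
    Continuous fun s => ∫ x, ‖φ (s + x) - φ x‖ ∂μ := by
  have : Fact ((1 : ENNReal) ≠ ⊤) := ⟨ENNReal.one_ne_top⟩
  have hcont : Continuous fun s : G => DomAddAct.mk s +ᵥ hφ.toL1 φ :=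
    DomAddAct.continuous_mk.vadd continuous_const
  refine (hcont.sub (continuous_const (y := hφ.toL1 φ))).norm.congr fun s => ?_
  have hs : Integrable (fun x => φ (s + x)) μ := hφ.comp_add_left s
  change ‖hs.toL1 _ - hφ.toL1 φ‖ = _
  rw [← Integrable.toL1_sub, L1.norm_eq_integral_norm]
  exact integral_congr_ae ((hs.sub hφ).coeFn_toL1.mono fun x hx => congrArg norm hx)

theorem Function.Periodic.exists_forall_norm_le {E : Type*} [SeminormedAddCommGroup E]
    {f : ℝ → E} {c : ℝ} (hper : Periodic f c) (hc : c ≠ 0) (hf : Continuous f) :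
    ∃ C, ∀ x, ‖f x‖ ≤ C :=
  let ⟨C, hC⟩ := (hper.isBounded_of_continuous hc hf).exists_norm_le
  ⟨C, fun x => hC _ (Set.mem_range_self x)⟩

variable {g φ : ℝ → ℝ}

theorem Function.Periodic.intervalIntegral_comp_add_eq_zero (hper : Periodic g 1)
    (hmean : ∫ t in (0 : ℝ)..1, g t = 0) (y : ℝ) : ∫ t in (0 : ℝ)..1, g (y + t) = 0 := by
  rw [intervalIntegral.integral_comp_add_left, add_zero, hper.intervalIntegral_add_eq y 0,
    zero_add, hmean]

theorem integral_comp_div_mul_eq_integral_comp_div_add_mul {l : ℝ} (hl : l ≠ 0) (t : ℝ) :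
    ∫ x, g (x / l) * φ x = ∫ x, g (x / l + t) * φ (l * t + x) := by
  rw [← integral_add_left_eq_self (fun x => g (x / l) * φ x) (l * t)]
  congr! 4 with x
  field_simp
  ring

theorem norm_integral_comp_div_mul_le (hg : Continuous g) (hper : Periodic g 1)
    (hmean : ∫ t in (0 : ℝ)..1, g t = 0) {B : ℝ} (hB : ∀ x, ‖g x‖ ≤ B) (hφ : Integrable φ)
    {l : ℝ} (hl : l ≠ 0) :
    ‖∫ x, g (x / l) * φ x‖ ≤ B * ∫ t in (0 : ℝ)..1, ∫ x, ‖φ (l * t + x) - φ x‖ := by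
  have hF : Integrable (uncurry fun t x => g (x / l + t) * φ x)
      ((volume.restrict (Set.Ioc (0 : ℝ) 1)).prod volume) :=
    (hφ.comp_snd _).bdd_mul (by fun_prop) (.of_forall fun _ => hB _)
  have hJ : IntervalIntegrable (fun t => ∫ x, g (x / l + t) * φ x) volume 0 1 :=
    (intervalIntegrable_iff_integrableOn_Ioc_of_le zero_le_one).2 hF.integral_prod_left
  have hJ_zero : ∫ t in (0 : ℝ)..1, ∫ x, g (x / l + t) * φ x = 0 := by
    rw [intervalIntegral.integral_of_le zero_le_one, integral_integral_swap hF]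
    simp_rw [integral_mul_const]
    simp [← intervalIntegral.integral_of_le zero_le_one,
      hper.intervalIntegral_comp_add_eq_zero hmean]
  have hbound : ∀ t, ‖(∫ x, g (x / l) * φ x) - ∫ x, g (x / l + t) * φ x‖
      ≤ B * ∫ x, ‖φ (l * t + x) - φ x‖ := by
    intro t
    rw [integral_comp_div_mul_eq_integral_comp_div_add_mul hl t, ← integral_sub,
      ← integral_const_mul]
    · refine norm_integral_le_of_norm_le (((hφ.comp_add_left _).sub hφ).norm.const_mul _)
        (.of_forall fun x => ?_)
      rw [← mul_sub, norm_mul]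
      exact mul_le_mul_of_nonneg_right (hB _) (norm_nonneg _)
    · exact (hφ.comp_add_left _).bdd_mul (by fun_prop) (.of_forall fun _ => hB _)
    · exact hφ.bdd_mul (by fun_prop) (.of_forall fun _ => hB _)
  calc ‖∫ x, g (x / l) * φ x‖
        = ‖∫ t in (0 : ℝ)..1, ((∫ x, g (x / l) * φ x) - ∫ x, g (x / l + t) * φ x)‖ := by
        rw [intervalIntegral.integral_sub intervalIntegrable_const hJ, hJ_zero]
        simp
    _ ≤ ∫ t in (0 : ℝ)..1, B * ∫ x, ‖φ (l * t + x) - φ x‖ :=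
        intervalIntegral.norm_integral_le_of_norm_le zero_le_one (.of_forall fun t _ => hbound t)
          ((continuous_const.mul ((continuous_integral_norm_add_sub hφ).comp
            (continuous_const_mul l))).intervalIntegrable 0 1)
    _ = _ := intervalIntegral.integral_const_mul _ _

theorem tendsto_integral_comp_div_mul_of_intervalIntegral_eq_zero (hg : Continuous g)
    (hper : Periodic g 1) (hmean : ∫ t in (0 : ℝ)..1, g t = 0) (hφ : Integrable φ) :
    Tendsto (fun l => ∫ x, g (x / l) * φ x) (𝓝[≠] 0) (𝓝 0) := by
  obtain ⟨B, hB⟩ := hper.exists_forall_norm_le one_ne_zero hg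
  have hbound : Continuous fun l => B * ∫ t in (0 : ℝ)..1, ∫ x, ‖φ (l * t + x) - φ x‖ :=
    continuous_const.mul <| intervalIntegral.continuous_parametric_intervalIntegral_of_continuous'
      (f := fun l t => ∫ x, ‖φ (l * t + x) - φ x‖)
      ((continuous_integral_norm_add_sub hφ).comp continuous_mul) 0 1
  refine squeeze_zero_norm' (eventually_nhdsWithin_of_forall fun l hl =>
    norm_integral_comp_div_mul_le hg hper hmean hB hφ hl) ?_
  simpa using (hbound.tendsto 0).mono_left nhdsWithin_le_nhds

theorem Function.Periodic.tendsto_integral_comp_div_mul (hg : Continuous g) (hper : Periodic g 1)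
    (hφ : Integrable φ) :
    Tendsto (fun l => ∫ x, g (x / l) * φ x) (𝓝[≠] 0)
      (𝓝 ((∫ y in (0 : ℝ)..1, g y) * ∫ x, φ x)) := by
  set M := ∫ y in (0 : ℝ)..1, g y
  have hmean : ∫ t in (0 : ℝ)..1, (g t - M) = 0 := by
    simp [intervalIntegral.integral_sub (hg.intervalIntegrable _ _) intervalIntegrable_const, M]
  have hlim := (tendsto_integral_comp_div_mul_of_intervalIntegral_eq_zero (g := fun x => g x - M)
    (hg.sub continuous_const) (fun x => by simp [hper x]) hmean hφ).add_const (M * ∫ x, φ x)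
  rw [zero_add] at hlim
  refine hlim.congr fun l => ?_
  obtain ⟨B, hB⟩ := hper.exists_forall_norm_le one_ne_zero hg
  have hint : Integrable fun x => g (x / l) * φ x :=
    hφ.bdd_mul (by fun_prop) (.of_forall fun _ => hB _)
  simp_rw [sub_mul]
  rw [integral_sub hint (hφ.const_mul M), integral_const_mul, sub_add_cancel]

/-- If `h` is continuous and 1-periodic and `Lₙ → 0⁺`, then for every
continuous compactly supported `φ`, `∫ h(x/Lₙ) φ(x) dx → (∫₀¹ h) · ∫ φ`
(weak-* convergence of the rescaled periodic functions to their mean). -/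
theorem periodic_rescaled_weak_star_convergence
    (h : ℝ → ℝ) (hcont : Continuous h) (hper : ∀ x, h (x + 1) = h x)
    (L : ℕ → ℝ) (hLpos : ∀ n, 0 < L n) (hL : Tendsto L atTop (𝓝 0)) :
    ∀ φ : ℝ → ℝ, Continuous φ → HasCompactSupport φ →
      Tendsto (fun n => ∫ x : ℝ, h (x / L n) * φ x) atTop
        (𝓝 ((∫ y in (0:ℝ)..1, h y) * ∫ x : ℝ, φ x)) := by
  intro φ hφc hφs
  exact (Function.Periodic.tendsto_integral_comp_div_mul hcont hper
    (hφc.integrable_of_hasCompactSupport hφs)).comp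
    (tendsto_nhdsWithin_iff.2 ⟨hL, .of_forall fun n => (hLpos n).ne'⟩)
end

section
/- Let 0 < L ≤ 1 and let p be a positive, L-periodic, C² solution of (a_L(x) p')' + f(x/L, p) = 0 on ℝ with 0 < p ≤ M. Then for every compact interval K ⊂ ℝ, ∫_K (p'(x))² dx ≤ ((|K| + 2)/α₁) · M · max_{(x,s) ∈ [0,1]×[0,M]} |f(x,s)|, where |K| denotes the length of K; in particular the bound is independent of L. -/
/-!
Multiply the equation by `p` and integrate between two critical points `c₁ ≤ x₁ ≤ x₂ ≤ c₂` of `p`;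
by Rolle and `L`-periodicity they can be chosen within `L ≤ 1` of the ends of `K`. The boundary
term `a_L p' p` of the integration by parts vanishes there, so
`α₁ ∫_K p'² ≤ ∫_{c₁}^{c₂} a_L p'² = ∫_{c₁}^{c₂} f(x/L, p) p ≤ (|K| + 2) · M · max |f|`,
where the maximum may be taken over `[0,1] × [0,M]` by `1`-periodicity of `f` in `x`.
-/

open Set intervalIntegral

theorem Function.Periodic.le_of_forall_mem_Icc_le {g : ℝ → ℝ} {T B : ℝ} (hg : Periodic g T)
    (hT : 0 < T) (hB : ∀ x ∈ Icc 0 T, g x ≤ B) (x : ℝ) : g x ≤ B := by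
  obtain ⟨y, hy, hxy⟩ := hg.exists_mem_Ico₀ hT x
  exact hxy ▸ hB y (Ico_subset_Icc_self hy)

theorem Function.Periodic.exists_deriv_eq_zero_mem_Ioo {p : ℝ → ℝ} {T : ℝ} (hp : Periodic p T)
    (hT : 0 < T) (hc : Continuous p) (x : ℝ) : ∃ c ∈ Ioo x (x + T), deriv p c = 0 :=
  exists_deriv_eq_zero (by linarith) hc.continuousOn (hp x).symm

section CriticalPoints

variable {k p g : ℝ → ℝ} {c₁ c₂ : ℝ}

theorem integral_mul_sq_deriv_eq_of_deriv_eq_zero (hp : ContDiff ℝ 1 p) (hg : Continuous g)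
    (hq : ∀ x, HasDerivAt (fun y => k y * deriv p y) (-g x) x)
    (hc₁ : deriv p c₁ = 0) (hc₂ : deriv p c₂ = 0) :
    ∫ x in c₁..c₂, k x * deriv p x * deriv p x = ∫ x in c₁..c₂, g x * p x := by
  rw [integral_mul_deriv_eq_deriv_mul (fun x _ => hq x)
    (fun x _ => ((hp.differentiable one_ne_zero) x).hasDerivAt)
    (hg.neg.intervalIntegrable _ _) ((hp.continuous_deriv le_rfl).intervalIntegrable _ _)]
  simp [hc₁, hc₂, integral_neg]

theorem mul_integral_sq_deriv_le_of_deriv_eq_zero {α B M : ℝ} (hc : c₁ ≤ c₂)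
    (hp : ContDiff ℝ 1 p) (hg : Continuous g)
    (hq : ∀ x, HasDerivAt (fun y => k y * deriv p y) (-g x) x)
    (hc₁ : deriv p c₁ = 0) (hc₂ : deriv p c₂ = 0) (hk : ∀ x, α ≤ k x)
    (hB : 0 ≤ B) (hgB : ∀ x, g x ≤ B) (hp₀ : ∀ x, 0 ≤ p x) (hpM : ∀ x, p x ≤ M) :
    α * ∫ x in c₁..c₂, deriv p x ^ 2 ≤ (c₂ - c₁) * (B * M) := by
  have hp' : Continuous (deriv p) := hp.continuous_deriv le_rfl
  have hqc : Continuous fun y => k y * deriv p y :=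
    continuous_iff_continuousAt.2 fun x => (hq x).continuousAt
  calc α * ∫ x in c₁..c₂, deriv p x ^ 2
      = ∫ x in c₁..c₂, α * deriv p x ^ 2 := (integral_const_mul _ _).symm
    _ ≤ ∫ x in c₁..c₂, k x * deriv p x * deriv p x := by
        refine integral_mono_on hc ((continuous_const.mul (hp'.pow 2)).intervalIntegrable _ _)
          ((hqc.mul hp').intervalIntegrable _ _) fun x _ => ?_
        rw [mul_assoc, ← sq]
        exact mul_le_mul_of_nonneg_right (hk x) (sq_nonneg _)
    _ = ∫ x in c₁..c₂, g x * p x := integral_mul_sq_deriv_eq_of_deriv_eq_zero hp hg hq hc₁ hc₂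
    _ ≤ ∫ x in c₁..c₂, B * M :=
        integral_mono_on hc ((hg.mul hp.continuous).intervalIntegrable _ _)
          intervalIntegrable_const fun x _ => mul_le_mul (hgB x) (hpM x) (hp₀ x) hB
    _ = (c₂ - c₁) * (B * M) := by rw [integral_const, smul_eq_mul]

end CriticalPoints

theorem stationary_state_H1_bound_general
    (a : ℝ → ℝ) (f : ℝ → ℝ → ℝ) (α₁ L M : ℝ) (p : ℝ → ℝ)
    (ha_C2 : ContDiff ℝ 2 a)
    (hα₁ : 0 < α₁)
    (ha_lb : ∀ x, α₁ ≤ a x)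
    (hf_per : ∀ x s, f (x + 1) s = f x s)
    (hf_C1 : ContDiff ℝ 1 (fun q : ℝ × ℝ => f q.1 q.2))
    (hL : 0 < L) (hL1 : L ≤ 1)
    (hp_C2 : ContDiff ℝ 2 p)
    (hp_pos : ∀ x, 0 < p x) (hp_le : ∀ x, p x ≤ M)
    (hp_per : ∀ x, p (x + L) = p x)
    (hp_eq : ∀ x, deriv (fun y => a (y / L) * deriv p y) x + f (x / L) (p x) = 0) :
    ∀ x₁ x₂ : ℝ, x₁ ≤ x₂ →
      ∀ B : ℝ, (∀ x ∈ Set.Icc (0:ℝ) 1, ∀ s ∈ Set.Icc (0:ℝ) M, |f x s| ≤ B) →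
        (∫ x in x₁..x₂, (deriv p x) ^ 2) ≤ ((x₂ - x₁ + 2) / α₁) * M * B := by
  intro x₁ x₂ hx B hB
  have hp_range : ∀ x, p x ∈ Icc 0 M := fun x => ⟨(hp_pos x).le, hp_le x⟩
  have hB₀ : 0 ≤ B := (abs_nonneg _).trans (hB 0 ⟨le_rfl, zero_le_one⟩ _ (hp_range 0))
  have hfB : ∀ x, f (x / L) (p x) ≤ B := fun x =>
    Function.Periodic.le_of_forall_mem_Icc_le (fun y => hf_per y (p x)) one_pos
      (fun y hy => (le_abs_self _).trans (hB y hy _ (hp_range x))) (x / L)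
  have hq : ∀ x, HasDerivAt (fun y => a (y / L) * deriv p y) (-f (x / L) (p x)) x := fun x => by
    have hdiff : Differentiable ℝ fun y => a (y / L) * deriv p y :=
      ((ha_C2.differentiable two_ne_zero).comp (differentiable_id.div_const L)).mul
        (contDiff_succ_iff_deriv.mp hp_C2).2.2.differentiable_one
    exact eq_neg_of_add_eq_zero_left (hp_eq x) ▸ (hdiff x).hasDerivAt
  have hp_C1 : ContDiff ℝ 1 p := hp_C2.of_le one_le_two
  obtain ⟨c₁, ⟨hc₁l, hc₁r⟩, hc₁⟩ := Function.Periodic.exists_deriv_eq_zero_mem_Ioo hp_per hL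
    hp_C1.continuous (x₁ - L)
  obtain ⟨c₂, ⟨hc₂l, hc₂r⟩, hc₂⟩ := Function.Periodic.exists_deriv_eq_zero_mem_Ioo hp_per hL
    hp_C1.continuous x₂
  have hK : ∫ x in x₁..x₂, deriv p x ^ 2 ≤ ∫ x in c₁..c₂, deriv p x ^ 2 :=
    integral_mono_interval (by linarith) hx hc₂l.le (MeasureTheory.ae_of_all _ fun _ => sq_nonneg _)
      (((hp_C1.continuous_deriv le_rfl).pow 2).intervalIntegrable _ _)
  have hcrit := mul_integral_sq_deriv_le_of_deriv_eq_zero (by linarith) hp_C1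
    (hf_C1.continuous.comp ((continuous_id.div_const L).prodMk hp_C1.continuous)) hq hc₁ hc₂
    (fun x => ha_lb (x / L)) hB₀ hfB (fun x => (hp_pos x).le) hp_le
  rw [div_mul_eq_mul_div, div_mul_eq_mul_div, le_div_iff₀ hα₁]
  nlinarith [mul_le_mul_of_nonneg_left hK hα₁.le, mul_nonneg hB₀ ((hp_range 0).1.trans (hp_le 0))]

/-- For `0 < L ≤ 1` and `p` a positive `L`-periodic `C²` solution of
`(a_L p')' + f(x/L,p) = 0` with `0 < p ≤ M`, for every compact interval
`K = [x₁,x₂]`, `∫_K (p')² ≤ ((|K|+2)/α₁) · M · max_{[0,1]×[0,M]} |f|`,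
a bound independent of `L`. -/
theorem stationary_state_H1_bound
    (a : ℝ → ℝ) (f : ℝ → ℝ → ℝ) (α₁ α₂ L M : ℝ) (p : ℝ → ℝ)
    (ha_C2 : ContDiff ℝ 2 a) (ha_per : ∀ x, a (x + 1) = a x)
    (hα₁ : 0 < α₁) (hα₁₂ : α₁ < α₂)
    (ha_lb : ∀ x, α₁ ≤ a x) (ha_ub : ∀ x, a x ≤ α₂)
    (hf_per : ∀ x s, f (x + 1) s = f x s)
    (hf_C1 : ContDiff ℝ 1 (fun q : ℝ × ℝ => f q.1 q.2))
    (hf_zero : ∀ x, f x 0 = 0)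
    (hM : 0 ≤ M) (hf_M : ∀ x s, M ≤ s → f x s ≤ 0)
    (hL : 0 < L) (hL1 : L ≤ 1)
    (hp_C2 : ContDiff ℝ 2 p)
    (hp_pos : ∀ x, 0 < p x) (hp_le : ∀ x, p x ≤ M)
    (hp_per : ∀ x, p (x + L) = p x)
    (hp_eq : ∀ x, deriv (fun y => a (y / L) * deriv p y) x + f (x / L) (p x) = 0) :
    ∀ x₁ x₂ : ℝ, x₁ ≤ x₂ →
      ∀ B : ℝ, (∀ x ∈ Set.Icc (0:ℝ) 1, ∀ s ∈ Set.Icc (0:ℝ) M, |f x s| ≤ B) →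
        (∫ x in x₁..x₂, (deriv p x) ^ 2) ≤ ((x₂ - x₁ + 2) / α₁) * M * B :=
  stationary_state_H1_bound_general a f α₁ L M p ha_C2 hα₁ ha_lb hf_per hf_C1 hL hL1 hp_C2 hp_pos
    hp_le hp_per hp_eq
end

section
/- Let L > 0, let μ : ℝ → ℝ be continuous and 1-periodic, let ρ ∈ ℝ, and let Φ be a positive, L-periodic, C² solution of -(a_L(x) Φ')' - μ(x/L) Φ = ρ Φ on ℝ. Then ρ = -(1/L) ∫₀^L a(x/L) (Φ'(x)/Φ(x))² dx - ∫₀¹ μ(y) dy; in particular, ρ ≤ -∫₀¹ μ(y) dy. -/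
open MeasureTheory Function

/-!
Dividing the equation by `Φ`, the logarithmic flux `a_L Φ' / Φ` is an `L`-periodic function
whose derivative is `-(ρ + μ(x/L)) - a_L (Φ'/Φ)²` (a Riccati equation). Integrating this
derivative over one period gives zero, which is the formula for `ρ`; the inequality follows
because `a_L (Φ'/Φ)² ≥ 0`.
-/

theorem Function.Periodic.deriv {f : ℝ → ℝ} {T : ℝ} (hf : Periodic f T) :
    Periodic (deriv f) T := fun x => by
  rw [← deriv_comp_add_const, hf.funext]

theorem Function.Periodic.integral_eq_zero_of_hasDerivAt {F f : ℝ → ℝ} {T : ℝ}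
    (hF : Periodic F T) (hderiv : ∀ x, HasDerivAt F (f x) x)
    (hf : IntervalIntegrable f volume 0 T) :
    ∫ x in (0 : ℝ)..T, f x = 0 := by
  rw [intervalIntegral.integral_eq_sub_of_hasDerivAt (fun x _ => hderiv x) hf,
    sub_eq_zero]
  simpa using hF 0

theorem hasDerivAt_flux_div {p Φ : ℝ → ℝ} {x : ℝ}
    (hflux : DifferentiableAt ℝ (fun y => p y * deriv Φ y) x)
    (hΦ : DifferentiableAt ℝ Φ x) (hΦx : Φ x ≠ 0) :
    HasDerivAt (fun y => p y * deriv Φ y / Φ y)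
      (deriv (fun y => p y * deriv Φ y) x / Φ x - p x * (deriv Φ x / Φ x) ^ 2) x := by
  refine (hflux.hasDerivAt.div hΦ.hasDerivAt hΦx).congr_deriv ?_
  field_simp

theorem periodic_eigenvalue_mul_period_eq {p q Φ : ℝ → ℝ} {T ρ : ℝ}
    (hp : Differentiable ℝ p) (hp_per : Periodic p T) (hq : Continuous q)
    (hΦ : ContDiff ℝ 2 Φ) (hΦ_ne : ∀ x, Φ x ≠ 0) (hΦ_per : Periodic Φ T)
    (heq : ∀ x, -deriv (fun y => p y * deriv Φ y) x - q x * Φ x = ρ * Φ x) :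
    ρ * T = -(∫ x in (0 : ℝ)..T, p x * (deriv Φ x / Φ x) ^ 2) - ∫ x in (0 : ℝ)..T, q x := by
  have hΦd : Differentiable ℝ Φ := hΦ.differentiable (by norm_num)
  have hΦ'd : Differentiable ℝ (deriv Φ) :=
    ((contDiff_succ_iff_deriv (n := 1)).mp hΦ).2.2.differentiable one_ne_zero
  have hp_cont : Continuous p := hp.continuous
  have hΦ'_cont : Continuous (deriv Φ) := hΦ'd.continuous
  have hflux_per : Periodic (fun y => p y * deriv Φ y / Φ y) T :=
    (hp_per.mul hΦ_per.deriv).div hΦ_per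
  have hriccati : ∀ x, HasDerivAt (fun y => p y * deriv Φ y / Φ y)
      (-(ρ + q x) - p x * (deriv Φ x / Φ x) ^ 2) x := fun x => by
    refine (hasDerivAt_flux_div ((hp.mul hΦ'd) x) (hΦd x) (hΦ_ne x)).congr_deriv ?_
    rw [sub_left_inj, div_eq_iff (hΦ_ne x)]
    linarith [heq x]
  have hq_int : IntervalIntegrable q volume 0 T := hq.intervalIntegrable 0 T
  have hsq_int : IntervalIntegrable (fun x => p x * (deriv Φ x / Φ x) ^ 2) volume 0 T :=
    (by fun_prop (disch := exact hΦ_ne _) :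
      Continuous fun x => p x * (deriv Φ x / Φ x) ^ 2).intervalIntegrable 0 T
  have hρq_int : IntervalIntegrable (fun x => -(ρ + q x)) volume 0 T :=
    (intervalIntegrable_const.add hq_int).neg
  have hzero := hflux_per.integral_eq_zero_of_hasDerivAt hriccati (hρq_int.sub hsq_int)
  rw [intervalIntegral.integral_sub hρq_int hsq_int,
    intervalIntegral.integral_neg, intervalIntegral.integral_add intervalIntegrable_const hq_int,
    intervalIntegral.integral_const, smul_eq_mul] at hzero
  linarith

theorem principal_eigenvalue_formula_general
    (a : ℝ → ℝ) (μ : ℝ → ℝ) (α₁ L ρ : ℝ) (Φ : ℝ → ℝ)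
    (ha_C2 : ContDiff ℝ 2 a) (ha_per : ∀ x, a (x + 1) = a x)
    (hα₁ : 0 < α₁)
    (ha_lb : ∀ x, α₁ ≤ a x)
    (hμ_cont : Continuous μ)
    (hL : 0 < L)
    (hΦ_C2 : ContDiff ℝ 2 Φ)
    (hΦ_pos : ∀ x, 0 < Φ x)
    (hΦ_per : ∀ x, Φ (x + L) = Φ x)
    (hΦ_eq : ∀ x, -(deriv (fun y => a (y / L) * deriv Φ y) x) - μ (x / L) * Φ x
        = ρ * Φ x) :
    ρ = -(1 / L) * (∫ x in (0:ℝ)..L, a (x / L) * (deriv Φ x / Φ x) ^ 2)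
        - (∫ y in (0:ℝ)..1, μ y) ∧
    ρ ≤ -(∫ y in (0:ℝ)..1, μ y) := by
  have haL_per : Periodic (fun x => a (x / L)) L := fun x => by
    simp only [add_div, div_self hL.ne', ha_per]
  have hρL := periodic_eigenvalue_mul_period_eq (p := fun x => a (x / L))
    ((ha_C2.differentiable (by norm_num)).comp (differentiable_id.div_const L)) haL_per
    (by fun_prop) hΦ_C2 (fun x => (hΦ_pos x).ne') hΦ_per hΦ_eq
  have hμ_rescale : ∫ x in (0 : ℝ)..L, μ (x / L) = L * ∫ y in (0 : ℝ)..1, μ y := by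
    simp [intervalIntegral.integral_comp_div μ hL.ne', div_self hL.ne']
  have henergy : 0 ≤ ∫ x in (0:ℝ)..L, a (x / L) * (deriv Φ x / Φ x) ^ 2 :=
    intervalIntegral.integral_nonneg hL.le fun x _ =>
      mul_nonneg (hα₁.le.trans (ha_lb _)) (sq_nonneg _)
  have hformula : ρ = -(1 / L) * (∫ x in (0:ℝ)..L, a (x / L) * (deriv Φ x / Φ x) ^ 2)
      - (∫ y in (0:ℝ)..1, μ y) := by
    rw [← mul_div_cancel_right₀ ρ hL.ne', hρL, hμ_rescale]
    field_simp
  refine ⟨hformula, ?_⟩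
  rw [hformula]
  linarith [mul_nonneg (one_div_pos.mpr hL).le henergy]

/-- If `Φ` is a positive `L`-periodic `C²` solution of
`-(a_L Φ')' - μ(x/L) Φ = ρ Φ`, then
`ρ = -(1/L) ∫₀^L a(x/L) (Φ'/Φ)² - ∫₀¹ μ`; in particular `ρ ≤ -∫₀¹ μ`. -/
theorem principal_eigenvalue_formula
    (a : ℝ → ℝ) (μ : ℝ → ℝ) (α₁ α₂ L ρ : ℝ) (Φ : ℝ → ℝ)
    (ha_C2 : ContDiff ℝ 2 a) (ha_per : ∀ x, a (x + 1) = a x)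
    (hα₁ : 0 < α₁) (hα₁₂ : α₁ < α₂)
    (ha_lb : ∀ x, α₁ ≤ a x) (ha_ub : ∀ x, a x ≤ α₂)
    (hμ_cont : Continuous μ) (hμ_per : ∀ x, μ (x + 1) = μ x)
    (hL : 0 < L)
    (hΦ_C2 : ContDiff ℝ 2 Φ)
    (hΦ_pos : ∀ x, 0 < Φ x)
    (hΦ_per : ∀ x, Φ (x + L) = Φ x)
    (hΦ_eq : ∀ x, -(deriv (fun y => a (y / L) * deriv Φ y) x) - μ (x / L) * Φ x
        = ρ * Φ x) :
    ρ = -(1 / L) * (∫ x in (0:ℝ)..L, a (x / L) * (deriv Φ x / Φ x) ^ 2)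
        - (∫ y in (0:ℝ)..1, μ y) ∧
    ρ ≤ -(∫ y in (0:ℝ)..1, μ y) :=
  principal_eigenvalue_formula_general a μ α₁ L ρ Φ ha_C2 ha_per hα₁ ha_lb hμ_cont hL hΦ_C2 hΦ_pos
    hΦ_per hΦ_eq
end

section
/- Set ρ₁ := -∫₀¹ μ(x) dx < 0 and let ε₀ > 0 be such that f(x,s) - μ(x)s ≥ (ρ₁/2)s for all x ∈ ℝ and 0 ≤ s ≤ ε₀. Let L > 0, let ρ ≤ ρ₁, and let Φ be a positive, L-periodic, C² solution of -(a_L(x) Φ')' - μ(x/L) Φ = ρ Φ on ℝ with 0 < Φ ≤ 1. Then -(a_L(x) (ε₀Φ)')' - f(x/L, ε₀Φ) ≤ (ρ₁/2) ε₀ Φ < 0 at every point of ℝ; that is, ε₀Φ is a strict subsolution of the stationary equation (a_L p')' + f(x/L,p) = 0. -/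
open MeasureTheory Filter Topology

/-- With `ρ₁ := -∫₀¹ μ < 0` and `ε₀ > 0` such that
`f(x,s) - μ(x)s ≥ (ρ₁/2)s` for `0 ≤ s ≤ ε₀`, if `Φ` is a positive `L`-periodic `C²`
solution of `-(a_L Φ')' - μ(x/L)Φ = ρΦ` with `ρ ≤ ρ₁` and `0 < Φ ≤ 1`, then
`-(a_L (ε₀Φ)')' - f(x/L, ε₀Φ) ≤ (ρ₁/2) ε₀ Φ < 0` everywhere: `ε₀Φ` is a strict
subsolution of the stationary equation. -/
theorem epsilon_phi_is_strict_subsolution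
    (a : ℝ → ℝ) (f : ℝ → ℝ → ℝ) (μ : ℝ → ℝ) (α₁ α₂ L ρ ε₀ : ℝ) (Φ : ℝ → ℝ)
    (ha_C2 : ContDiff ℝ 2 a) (ha_per : ∀ x, a (x + 1) = a x)
    (hα₁ : 0 < α₁) (hα₁₂ : α₁ < α₂)
    (ha_lb : ∀ x, α₁ ≤ a x) (ha_ub : ∀ x, a x ≤ α₂)
    (hf_per : ∀ x s, f (x + 1) s = f x s)
    (hf_C1 : ContDiff ℝ 1 (fun q : ℝ × ℝ => f q.1 q.2))
    (hf_zero : ∀ x, f x 0 = 0)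
    (hμ_lim : ∀ x, Tendsto (fun s => f x s / s) (𝓝[>] (0:ℝ)) (𝓝 (μ x)))
    (hμ_pos : 0 < ∫ x in (0:ℝ)..1, μ x)
    (hε₀ : 0 < ε₀)
    (hε₀f : ∀ x s : ℝ, 0 ≤ s → s ≤ ε₀ →
      f x s - μ x * s ≥ (-(∫ y in (0:ℝ)..1, μ y)) / 2 * s)
    (hL : 0 < L)
    (hρ : ρ ≤ -(∫ y in (0:ℝ)..1, μ y))
    (hΦ_C2 : ContDiff ℝ 2 Φ)
    (hΦ_pos : ∀ x, 0 < Φ x) (hΦ_le : ∀ x, Φ x ≤ 1)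
    (hΦ_per : ∀ x, Φ (x + L) = Φ x)
    (hΦ_eq : ∀ x, -(deriv (fun y => a (y / L) * deriv Φ y) x) - μ (x / L) * Φ x
        = ρ * Φ x) :
    ∀ x : ℝ,
      -(deriv (fun y => a (y / L) * deriv (fun z => ε₀ * Φ z) y) x)
          - f (x / L) (ε₀ * Φ x)
        ≤ (-(∫ y in (0:ℝ)..1, μ y)) / 2 * (ε₀ * Φ x) ∧
      (-(∫ y in (0:ℝ)..1, μ y)) / 2 * (ε₀ * Φ x) < 0 := by

  intro x
  have h1 : (fun y => a (y / L) * deriv (fun z => ε₀ * Φ z) y)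
      = fun y => ε₀ * (a (y / L) * deriv Φ y) := by
    funext y
    rw [deriv_const_mul_field]
    ring
  have h2 : deriv (fun y => a (y / L) * deriv (fun z => ε₀ * Φ z) y) x
      = ε₀ * deriv (fun y => a (y / L) * deriv Φ y) x := by
    rw [h1, deriv_const_mul_field]
  have heq := hΦ_eq x
  have hs0 : 0 ≤ ε₀ * Φ x := le_of_lt (mul_pos hε₀ (hΦ_pos x))
  have hs1 : ε₀ * Φ x ≤ ε₀ := by
    nlinarith [hΦ_le x, hΦ_pos x]
  have hf := hε₀f (x / L) (ε₀ * Φ x) hs0 hs1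
  have hρ1 : -(∫ y in (0:ℝ)..1, μ y) < 0 := by linarith
  constructor
  · rw [h2]
    nlinarith [hΦ_pos x, mul_pos hε₀ (hΦ_pos x)]
  · nlinarith [mul_pos hε₀ (hΦ_pos x)]
end

section
/- Let L > 0. Let p be a positive, L-periodic, C² solution of (a_L(x) p')' + f(x/L, p) = 0 on ℝ, and let ψ be a positive, L-periodic, C² function satisfying the strict subsolution inequality (a_L(x) ψ')' + f(x/L, ψ) > 0 at every point of ℝ. Then p(x) ≥ ψ(x) for all x ∈ ℝ; in particular max_{x∈ℝ} p(x) ≥ max_{x∈ℝ} ψ(x). -/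
open Filter Topology Set

/-!
Let `γ = min (p / ψ)`, attained at some `x₀` by periodicity. Then `w = p - γ ψ ≥ 0` vanishes at
`x₀`, so `w'(x₀) = 0 ≤ w''(x₀)` and `(a_L w')'(x₀) ≥ 0`. If `γ < 1`, the strict monotonicity of
`s ↦ f(x, s) / s` gives `f(x₀/L, γ ψ) > γ f(x₀/L, ψ)`, and combining the equation for `p` with
`γ` times the strict inequality for `ψ` yields `(a_L w')'(x₀) < 0`. Hence `γ ≥ 1`, i.e. `ψ ≤ p`.
-/

theorem Function.Periodic.exists_forall_le_of_continuous {g : ℝ → ℝ} {c : ℝ}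
    (hg : Function.Periodic g c) (hc : c ≠ 0) (hcont : Continuous g) : ∃ x₀, ∀ x, g x₀ ≤ g x := by
  obtain ⟨_, ⟨x₀, rfl⟩, hx₀⟩ :=
    (hg.compact_of_continuous hc hcont).exists_isLeast (range_nonempty g)
  exact ⟨x₀, fun x => hx₀ ⟨x, rfl⟩⟩

/-- If `f''(x₀) < 0`, the second derivative test makes `x₀` also a local maximum, so `f` is
locally constant and `f''(x₀) = 0`. -/
theorem IsLocalMin.deriv_deriv_nonneg {f : ℝ → ℝ} {x₀ : ℝ} (hmin : IsLocalMin f x₀)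
    (hc : ContinuousAt f x₀) : 0 ≤ deriv (deriv f) x₀ := by
  by_contra! hneg
  have hmax := isLocalMax_of_deriv_deriv_neg hneg hmin.deriv_eq_zero hc
  have hconst : f =ᶠ[𝓝 x₀] fun _ => f x₀ :=
    (hmin.and hmax).mono fun x hx => le_antisymm hx.2 hx.1
  exact hneg.ne (by simpa using hconst.deriv.deriv_eq)

theorem deriv_mul_deriv_nonneg_of_isLocalMin {A w : ℝ → ℝ} {x₀ : ℝ}
    (hA : DifferentiableAt ℝ A x₀) (hA₀ : 0 ≤ A x₀) (hw : ContDiff ℝ 2 w)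
    (hmin : IsLocalMin w x₀) : 0 ≤ deriv (fun y => A y * deriv w y) x₀ := by
  have hw' : DifferentiableAt ℝ (deriv w) x₀ :=
    (hw.iterate_deriv' 1 1).differentiable one_ne_zero x₀
  rw [deriv_fun_mul hA hw', hmin.deriv_eq_zero, mul_zero, zero_add]
  exact mul_nonneg hA₀ (hmin.deriv_deriv_nonneg hw.continuous.continuousAt)

theorem mul_deriv_le_deriv_of_isLocalMin_sub_mul {A p ψ : ℝ → ℝ} {x₀ γ : ℝ}
    (hA : DifferentiableAt ℝ A x₀) (hA₀ : 0 ≤ A x₀) (hp : ContDiff ℝ 2 p) (hψ : ContDiff ℝ 2 ψ)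
    (hmin : IsLocalMin (fun x => p x - γ * ψ x) x₀) :
    γ * deriv (fun y => A y * deriv ψ y) x₀ ≤ deriv (fun y => A y * deriv p y) x₀ := by
  have hp₁ : Differentiable ℝ p := hp.differentiable two_ne_zero
  have hψ₁ : Differentiable ℝ ψ := hψ.differentiable two_ne_zero
  have hAp : DifferentiableAt ℝ (fun y => A y * deriv p y) x₀ :=
    hA.mul ((hp.iterate_deriv' 1 1).differentiable one_ne_zero x₀)
  have hAψ : DifferentiableAt ℝ (fun y => A y * deriv ψ y) x₀ :=
    hA.mul ((hψ.iterate_deriv' 1 1).differentiable one_ne_zero x₀)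
  have hsplit : (fun y => A y * deriv (fun x => p x - γ * ψ x) y)
      = fun y => A y * deriv p y - γ * (A y * deriv ψ y) := by
    funext y
    rw [deriv_fun_sub (hp₁ y) ((hψ₁ y).const_mul γ), deriv_const_mul γ (hψ₁ y)]
    ring
  have hw := deriv_mul_deriv_nonneg_of_isLocalMin hA hA₀
    (hp.sub (contDiff_const.mul hψ)) hmin
  rw [hsplit, deriv_fun_sub hAp (hAψ.const_mul γ), deriv_const_mul γ hAψ] at hw
  linarith

theorem StrictAntiOn.mul_apply_lt_apply_mul {F : ℝ → ℝ}
    (hF : StrictAntiOn (fun s => F s / s) (Ioi 0)) {γ s : ℝ} (hγ₀ : 0 < γ) (hγ₁ : γ < 1)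
    (hs : 0 < s) : γ * F s < F (γ * s) := by
  have hγs : 0 < γ * s := mul_pos hγ₀ hs
  have h := hF hγs hs (by nlinarith)
  rw [div_lt_div_iff₀ hs hγs] at h
  nlinarith

theorem one_le_of_touching {A F p ψ : ℝ → ℝ} {x₀ γ : ℝ}
    (hA : DifferentiableAt ℝ A x₀) (hA₀ : 0 ≤ A x₀)
    (hF : StrictAntiOn (fun s => F s / s) (Ioi 0))
    (hp : ContDiff ℝ 2 p) (hψ : ContDiff ℝ 2 ψ) (hψ₀ : 0 < ψ x₀) (hγ : 0 < γ)
    (hmin : IsLocalMin (fun x => p x - γ * ψ x) x₀) (htouch : p x₀ = γ * ψ x₀)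
    (hp_eq : deriv (fun y => A y * deriv p y) x₀ + F (p x₀) = 0)
    (hψ_sub : 0 < deriv (fun y => A y * deriv ψ y) x₀ + F (ψ x₀)) : 1 ≤ γ := by
  by_contra! hγ₁
  have hcmp := mul_deriv_le_deriv_of_isLocalMin_sub_mul hA hA₀ hp hψ hmin
  have hFγ := hF.mul_apply_lt_apply_mul hγ hγ₁ hψ₀
  rw [htouch] at hp_eq
  nlinarith [mul_pos hγ hψ_sub]

theorem stationary_state_dominates_subsolution_general
    (a : ℝ → ℝ) (f : ℝ → ℝ → ℝ) (α₁ L : ℝ) (p ψ : ℝ → ℝ)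
    (ha_C2 : ContDiff ℝ 2 a)
    (hα₁ : 0 < α₁)
    (ha_lb : ∀ x, α₁ ≤ a x)
    (hf_dec : ∀ x, StrictAntiOn (fun s => f x s / s) (Set.Ioi 0))
    (hL : 0 < L)
    (hp_C2 : ContDiff ℝ 2 p)
    (hp_pos : ∀ x, 0 < p x)
    (hp_per : ∀ x, p (x + L) = p x)
    (hp_eq : ∀ x, deriv (fun y => a (y / L) * deriv p y) x + f (x / L) (p x) = 0)
    (hψ_C2 : ContDiff ℝ 2 ψ)
    (hψ_pos : ∀ x, 0 < ψ x)
    (hψ_per : ∀ x, ψ (x + L) = ψ x)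
    (hψ_sub : ∀ x, 0 < deriv (fun y => a (y / L) * deriv ψ y) x + f (x / L) (ψ x)) :
    (∀ x, ψ x ≤ p x) ∧ sSup (Set.range ψ) ≤ sSup (Set.range p) := by
  have hratio_per : Function.Periodic (fun x => p x / ψ x) L := fun x => by
    simp only [hp_per, hψ_per]
  obtain ⟨x₀, hx₀⟩ := hratio_per.exists_forall_le_of_continuous hL.ne'
    (hp_C2.continuous.div hψ_C2.continuous fun x => (hψ_pos x).ne')
  set γ := p x₀ / ψ x₀
  have hγψ_le (x : ℝ) : γ * ψ x ≤ p x := (le_div_iff₀ (hψ_pos x)).mp (hx₀ x)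
  have htouch : p x₀ = γ * ψ x₀ := (div_mul_cancel₀ _ (hψ_pos x₀).ne').symm
  have hγ : 1 ≤ γ :=
    one_le_of_touching (F := f (x₀ / L))
      (((ha_C2.differentiable two_ne_zero).comp (differentiable_id.div_const L)) x₀)
      (hα₁.le.trans (ha_lb _)) (hf_dec _) hp_C2 hψ_C2 (hψ_pos x₀)
      (div_pos (hp_pos x₀) (hψ_pos x₀))
      (Eventually.of_forall fun x => by dsimp only; linarith [hγψ_le x])
      htouch (hp_eq x₀) (hψ_sub x₀)
  have hle (x : ℝ) : ψ x ≤ p x := (le_mul_of_one_le_left (hψ_pos x).le hγ).trans (hγψ_le x)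
  exact ⟨hle, ciSup_mono
    ((Function.Periodic.compact_of_continuous hp_per hL.ne' hp_C2.continuous).bddAbove) hle⟩

/-- If `p` is a positive `L`-periodic `C²` solution of
`(a_L p')' + f(x/L,p) = 0` and `ψ` is a positive `L`-periodic `C²` strict
subsolution (`(a_L ψ')' + f(x/L,ψ) > 0` everywhere), then `p ≥ ψ` on `ℝ`;
in particular `max p ≥ max ψ`. -/
theorem stationary_state_dominates_subsolution
    (a : ℝ → ℝ) (f : ℝ → ℝ → ℝ) (α₁ α₂ L : ℝ) (p ψ : ℝ → ℝ)
    (ha_C2 : ContDiff ℝ 2 a) (ha_per : ∀ x, a (x + 1) = a x)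
    (hα₁ : 0 < α₁) (hα₁₂ : α₁ < α₂)
    (ha_lb : ∀ x, α₁ ≤ a x) (ha_ub : ∀ x, a x ≤ α₂)
    (hf_per : ∀ x s, f (x + 1) s = f x s)
    (hf_C1 : ContDiff ℝ 1 (fun q : ℝ × ℝ => f q.1 q.2))
    (hf_zero : ∀ x, f x 0 = 0)
    (hf_dec : ∀ x, StrictAntiOn (fun s => f x s / s) (Set.Ioi 0))
    (hL : 0 < L)
    (hp_C2 : ContDiff ℝ 2 p)
    (hp_pos : ∀ x, 0 < p x)
    (hp_per : ∀ x, p (x + L) = p x)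
    (hp_eq : ∀ x, deriv (fun y => a (y / L) * deriv p y) x + f (x / L) (p x) = 0)
    (hψ_C2 : ContDiff ℝ 2 ψ)
    (hψ_pos : ∀ x, 0 < ψ x)
    (hψ_per : ∀ x, ψ (x + L) = ψ x)
    (hψ_sub : ∀ x, 0 < deriv (fun y => a (y / L) * deriv ψ y) x + f (x / L) (ψ x)) :
    (∀ x, ψ x ≤ p x) ∧ sSup (Set.range ψ) ≤ sSup (Set.range p) :=
  stationary_state_dominates_subsolution_general a f α₁ L p ψ ha_C2 hα₁ ha_lb hf_dec hL hp_C2 hp_pos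
    hp_per hp_eq hψ_C2 hψ_pos hψ_per hψ_sub
end

section
/- Let (L_n) be a sequence in (0,1) with L_n → 0, and for each n let p_n be a positive, L_n-periodic, C² solution of (a_{L_n}(x) p_n')' + f(x/L_n, p_n) = 0 on ℝ with 0 < p_n ≤ M. Then p_n converges to the constant p₀ (the unique positive zero of g) uniformly on every compact subset of ℝ; moreover, for every 0 ≤ δ < 1/2 and every compact interval K, the Hölder seminorm sup_{x≠y∈K} |(p_n - p₀)(x) - (p_n - p₀)(y)| / |x-y|^δ tends to 0, and for every smooth compactly supported φ : ℝ → ℝ, ∫_ℝ p_n'(x) φ(x) dx → 0 (weak H¹_loc convergence to p₀). -/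
open MeasureTheory Filter Topology

open intervalIntegral


lemma g_strict (f : ℝ → ℝ → ℝ)
    (hf_C1 : ContDiff ℝ 1 (fun q : ℝ × ℝ => f q.1 q.2))
    (hf_dec : ∀ x, StrictAntiOn (fun s => f x s / s) (Set.Ioi 0))
    {s t : ℝ} (hs : 0 < s) (hst : s < t) :
    (∫ y in (0:ℝ)..1, f y t) / t < (∫ y in (0:ℝ)..1, f y s) / s := by
  have ht : 0 < t := hs.trans hst
  have hcont : Continuous fun q : ℝ × ℝ => f q.1 q.2 := hf_C1.continuous
  have hcs : Continuous fun y => f y s :=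
    hcont.comp (continuous_id.prodMk continuous_const)
  have hct : Continuous fun y => f y t :=
    hcont.comp (continuous_id.prodMk continuous_const)
  have h1 : (0:ℝ) < ∫ y in (0:ℝ)..1, (f y s / s - f y t / t) := by
    apply intervalIntegral_pos_of_pos_on
    · exact ((hcs.div_const s).sub (hct.div_const t)).intervalIntegrable 0 1
    · intro y _
      have := hf_dec y (Set.mem_Ioi.2 hs) (Set.mem_Ioi.2 ht) hst
      simpa [sub_pos] using this
    · norm_num
  have h2 : (∫ y in (0:ℝ)..1, (f y s / s - f y t / t))
      = (∫ y in (0:ℝ)..1, f y s) / s - (∫ y in (0:ℝ)..1, f y t) / t := by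
    rw [integral_sub ((hcs.div_const s).intervalIntegrable 0 1)
      ((hct.div_const t).intervalIntegrable 0 1), intervalIntegral.integral_div, intervalIntegral.integral_div]
  linarith [h2 ▸ h1]

lemma key_estimates (a : ℝ → ℝ) (f : ℝ → ℝ → ℝ) (α₁ M C Λ : ℝ)
    (ha_C2 : ContDiff ℝ 2 a) (hα₁ : 0 < α₁) (ha_lb : ∀ x, α₁ ≤ a x)
    (ha_per : ∀ x, a (x + 1) = a x)
    (hf_C1 : ContDiff ℝ 1 (fun q : ℝ × ℝ => f q.1 q.2))
    (hf_dec : ∀ x, StrictAntiOn (fun s => f x s / s) (Set.Ioi 0))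
    (hC0 : 0 ≤ C) (hΛ0 : 0 ≤ Λ)
    (hC : ∀ y ∈ Set.Icc (0:ℝ) 1, ∀ s ∈ Set.Icc 0 M, |f y s| ≤ C)
    (hΛ : ∀ y ∈ Set.Icc (0:ℝ) 1, ∀ s ∈ Set.Icc 0 M, ∀ t ∈ Set.Icc 0 M,
      |f y s - f y t| ≤ Λ * |s - t|)
    (l : ℝ) (hl : 0 < l) (P : ℝ → ℝ)
    (hP : ContDiff ℝ 2 P) (hPpos : ∀ x, 0 < P x) (hPle : ∀ x, P x ≤ M)
    (hPper : ∀ x, P (x + l) = P x)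
    (hPeq : ∀ x, deriv (fun y => a (y / l) * deriv P y) x + f (x / l) (P x) = 0) :
    ∃ r, 0 < r ∧ r ≤ M ∧ (∫ y in (0:ℝ)..1, f y r) ≤ 0 ∧
      |∫ y in (0:ℝ)..1, f y r| ≤ Λ * (C * l / α₁ * l) ∧
      (∀ x, P x ≤ r) ∧ (∀ x, r - C * l / α₁ * l ≤ P x) ∧
      (∀ x, |deriv P x| ≤ C * l / α₁) := by
  have hl' : l ≠ 0 := hl.ne'
  have h2 := contDiff_succ_iff_deriv.mp (show ContDiff ℝ (1 + 1) P by
    rw [one_add_one_eq_two]; exact hP)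
  have hPd : Differentiable ℝ P := h2.1
  have hdP : ContDiff ℝ 1 (deriv P) := h2.2.2
  have hdPc : Continuous (deriv P) := hdP.continuous
  have hA : ContDiff ℝ 2 (fun y => a (y / l)) := ha_C2.comp (contDiff_id.div_const l)
  set F : ℝ → ℝ := fun y => a (y / l) * deriv P y with hF_def
  have hF1 : ContDiff ℝ 1 F := (hA.of_le one_le_two).mul hdP
  have hFd : Differentiable ℝ F := hF1.differentiable one_ne_zero
  have hcf : Continuous fun q : ℝ × ℝ => f q.1 q.2 := hf_C1.continuous
  have hPc : Continuous P := hP.continuous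
  have hfP : Continuous fun x => f (x / l) (P x) :=
    hcf.comp ((continuous_id.div_const l).prodMk hPc)
  have hF' : ∀ x, HasDerivAt F (-(f (x / l) (P x))) x := by
    intro x
    have h := (hFd x).hasDerivAt
    have he : deriv F x = -(f (x / l) (P x)) := by have := hPeq x; linarith
    rwa [he] at h
  have hAper : ∀ x : ℝ, a ((x + l) / l) = a (x / l) := by
    intro x; rw [add_div, div_self hl', ha_per]
  have hdPper : ∀ x, deriv P (x + l) = deriv P x := by
    intro x
    have h1 : HasDerivAt (fun y => P (y + l)) (deriv P (x + l)) x := by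
      have h0 := (hPd (x + l)).hasDerivAt
      simpa [Function.comp_def] using h0.comp x ((hasDerivAt_id x).add_const l)
    rw [funext hPper] at h1
    exact h1.deriv.symm
  have hFper : Function.Periodic F l := by
    intro x; simp only [hF_def]; rw [hAper, hdPper]
  have hPper' : Function.Periodic P l := hPper
  have hP0l : P l = P 0 := by simpa using hPper 0
  obtain ⟨c, hc, hc'⟩ := exists_hasDerivAt_eq_slope P (deriv P) hl
    hPc.continuousOn (fun x _ => (hPd x).hasDerivAt)
  have hdPc0 : deriv P c = 0 := by rw [hc', hP0l]; simp
  have hFc : F c = 0 := by simp only [hF_def]; rw [hdPc0, mul_zero]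
  have hmem : ∀ t ∈ Set.Icc (0:ℝ) l, |f (t / l) (P t)| ≤ C := by
    intro t ht
    exact hC _ ⟨div_nonneg ht.1 hl.le, (div_le_one hl).2 ht.2⟩ _ ⟨(hPpos t).le, hPle t⟩
  have hFbd : ∀ x ∈ Set.Icc (0:ℝ) l, |F x| ≤ C * l := by
    intro x hx
    have hftc : ∫ t in c..x, -(f (t / l) (P t)) = F x - F c :=
      integral_eq_sub_of_hasDerivAt (fun t _ => hF' t) (hfP.neg.intervalIntegrable c x)
    have hbd : |∫ t in c..x, -(f (t / l) (P t))| ≤ C * |x - c| := by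
      rw [← Real.norm_eq_abs]
      apply intervalIntegral.norm_integral_le_of_norm_le_const
      intro t ht
      have h1 : t ∈ Set.Icc (0:ℝ) l := by
        rcases Set.mem_uIoc.mp ht with h | h
        · exact ⟨le_trans hc.1.le h.1.le, le_trans h.2 hx.2⟩
        · exact ⟨le_trans hx.1 h.1.le, le_trans h.2 hc.2.le⟩
      simpa using hmem t h1
    have h3 : |x - c| ≤ l := by
      rw [abs_le]; constructor <;> [linarith [hx.1, hc.2.le]; linarith [hx.2, hc.1.le]]
    calc |F x| = |∫ t in c..x, -(f (t / l) (P t))| := by rw [hftc, hFc, sub_zero]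
      _ ≤ C * |x - c| := hbd
      _ ≤ C * l := mul_le_mul_of_nonneg_left h3 hC0
  have hFbd' : ∀ x, |F x| ≤ C * l := by
    intro x
    obtain ⟨y, hy, hxy⟩ := hFper.exists_mem_Ico hl x 0
    rw [hxy]
    exact hFbd y ⟨hy.1, by simpa using hy.2.le⟩
  have hdPbd : ∀ x, |deriv P x| ≤ C * l / α₁ := by
    intro x
    have hax : α₁ ≤ a (x / l) := ha_lb _
    have h1 : α₁ * |deriv P x| ≤ |F x| := by
      simp only [hF_def, abs_mul, abs_of_pos (lt_of_lt_of_le hα₁ hax)]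
      exact mul_le_mul_of_nonneg_right hax (abs_nonneg _)
    rw [le_div_iff₀ hα₁]
    calc |deriv P x| * α₁ = α₁ * |deriv P x| := mul_comm _ _
      _ ≤ |F x| := h1
      _ ≤ C * l := hFbd' x
  have hLipP : ∀ x y, |P x - P y| ≤ C * l / α₁ * |x - y| := by
    intro x y
    have := Convex.norm_image_sub_le_of_norm_hasDerivWithin_le (s := Set.univ) (f := P)
      (f' := deriv P) (fun z _ => (hPd z).hasDerivAt.hasDerivWithinAt)
      (fun z _ => hdPbd z) convex_univ (Set.mem_univ y) (Set.mem_univ x)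
    simpa [Real.norm_eq_abs] using this
  obtain ⟨xm, hxm, hmax⟩ := isCompact_Icc.exists_isMaxOn (Set.nonempty_Icc.2 hl.le)
    (hPc.continuousOn (s := Set.Icc 0 l))
  set r := P xm with hr_def
  have hr_pos : 0 < r := hPpos xm
  have hr_M : r ≤ M := hPle xm
  have hub : ∀ x, P x ≤ r := by
    intro x
    obtain ⟨y, hy, hxy⟩ := hPper'.exists_mem_Ico hl x 0
    rw [hxy]
    exact hmax ⟨hy.1, by simpa using hy.2.le⟩
  have hεnn : 0 ≤ C * l / α₁ := div_nonneg (mul_nonneg hC0 hl.le) hα₁.le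
  have hlb : ∀ x, r - C * l / α₁ * l ≤ P x := by
    intro x
    obtain ⟨y, hy, hxy⟩ := hPper'.exists_mem_Ico hl x xm
    have h1 : |xm - y| ≤ l := by
      rw [abs_le]; constructor <;> [linarith [hy.2]; linarith [hy.1]]
    have h2 : |P xm - P y| ≤ C * l / α₁ * l :=
      le_trans (hLipP xm y) (mul_le_mul_of_nonneg_left h1 hεnn)
    rw [hxy]
    have := abs_le.mp h2
    linarith [this.1]
  -- integral identity 1: ∫₀ˡ f(x/l, P x) dx = 0
  have hFl : F l = F 0 := by simpa using hFper 0
  have hint1 : ∫ x in (0:ℝ)..l, -(f (x / l) (P x)) = 0 := by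
    rw [integral_eq_sub_of_hasDerivAt (fun t _ => hF' t)
      (hfP.neg.intervalIntegrable 0 l), hFl, sub_self]
  have hint1' : ∫ x in (0:ℝ)..l, f (x / l) (P x) = 0 := by
    rw [intervalIntegral.integral_neg, neg_eq_zero] at hint1; exact hint1
  -- change of variables
  have hcv1 : ∀ (h : ℝ → ℝ), (∫ x in (0:ℝ)..l, h (x / l)) = l * ∫ y in (0:ℝ)..1, h y := by
    intro h
    rw [intervalIntegral.integral_comp_div (a := (0:ℝ)) (b := l) h hl', zero_div,
      div_self hl', smul_eq_mul]
  have hcv : (∫ x in (0:ℝ)..l, f (x / l) (P x)) = l * ∫ y in (0:ℝ)..1, f y (P (l * y)) := by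
    rw [← hcv1 (fun y => f y (P (l * y)))]
    apply intervalIntegral.integral_congr
    intro x _
    simp only [mul_comm l, div_mul_cancel₀ x hl']
  have hzero : ∫ y in (0:ℝ)..1, f y (P (l * y)) = 0 := by
    rw [hcv] at hint1'
    exact (mul_eq_zero.mp hint1').resolve_left hl'
  -- bound on g r
  have hPmem : ∀ x : ℝ, P x ∈ Set.Icc 0 M := fun x => ⟨(hPpos x).le, hPle x⟩
  have hcfr : ∀ s : ℝ, Continuous fun y => f y s := fun s =>
    hcf.comp (continuous_id.prodMk continuous_const)
  have hcfl : Continuous fun y => f y (P (l * y)) :=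
    hcf.comp (continuous_id.prodMk (hPc.comp (continuous_const.mul continuous_id)))
  have hgr1 : |∫ y in (0:ℝ)..1, f y r| ≤ Λ * (C * l / α₁ * l) := by
    have he : (∫ y in (0:ℝ)..1, f y r)
        = ∫ y in (0:ℝ)..1, (f y r - f y (P (l * y))) := by
      rw [integral_sub ((hcfr r).intervalIntegrable 0 1) (hcfl.intervalIntegrable 0 1),
        hzero, sub_zero]
    rw [he, ← Real.norm_eq_abs]
    have hb := intervalIntegral.norm_integral_le_of_norm_le_const
      (C := Λ * (C * l / α₁ * l)) (a := (0:ℝ)) (b := 1)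
      (f := fun y => f y r - f y (P (l * y))) ?_
    · simpa using hb
    · intro y hy
      have hy' : y ∈ Set.Icc (0:ℝ) 1 := by
        rcases Set.mem_uIoc.mp hy with h | h
        · exact ⟨h.1.le, h.2⟩
        · exact absurd (h.1.trans_le h.2) (by norm_num)
      have h1 : |f y r - f y (P (l * y))| ≤ Λ * |r - P (l * y)| :=
        hΛ y hy' r ⟨hr_pos.le, hr_M⟩ _ (hPmem _)
      have h2 : |r - P (l * y)| ≤ C * l / α₁ * l := by
        rw [abs_of_nonneg (by linarith [hub (l * y)])]
        linarith [hlb (l * y)]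
      calc ‖f y r - f y (P (l * y))‖ ≤ Λ * |r - P (l * y)| := h1
        _ ≤ Λ * (C * l / α₁ * l) := mul_le_mul_of_nonneg_left h2 hΛ0
  -- the 1/P test: ∫₀¹ f(y, P(ly))/P(ly) dy ≤ 0
  have hG' : ∀ x, HasDerivAt (fun x => F x / P x)
      ((-f (x / l) (P x) * P x - F x * deriv P x) / P x ^ 2) x :=
    fun x => (hF' x).div (hPd x).hasDerivAt (hPpos x).ne'
  have hGint : Continuous fun x => (-f (x / l) (P x) * P x - F x * deriv P x) / P x ^ 2 := by
    apply Continuous.div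
    · exact (hfP.neg.mul hPc).sub (hF1.continuous.mul hdPc)
    · exact hPc.pow 2
    · exact fun x => pow_ne_zero 2 (hPpos x).ne'
  have hint2 : ∫ x in (0:ℝ)..l, (-f (x / l) (P x) * P x - F x * deriv P x) / P x ^ 2 = 0 := by
    rw [integral_eq_sub_of_hasDerivAt (fun t _ => hG' t) (hGint.intervalIntegrable 0 l)]
    show F l / P l - F 0 / P 0 = 0
    rw [hFl, hP0l, sub_self]
  have hsplit : ∀ x : ℝ, (-f (x / l) (P x) * P x - F x * deriv P x) / P x ^ 2
      = -(f (x / l) (P x) / P x) - a (x / l) * (deriv P x / P x) ^ 2 := by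
    intro x
    have hx := (hPpos x).ne'
    simp only [hF_def]
    field_simp
  have hq_cont : Continuous fun x => f (x / l) (P x) / P x :=
    hfP.div hPc fun x => (hPpos x).ne'
  have hw_cont : Continuous fun x => a (x / l) * (deriv P x / P x) ^ 2 :=
    ((ha_C2.continuous.comp (continuous_id.div_const l))).mul
      ((hdPc.div hPc fun x => (hPpos x).ne').pow 2)
  have hint2' : (∫ x in (0:ℝ)..l, f (x / l) (P x) / P x)
      = - ∫ x in (0:ℝ)..l, a (x / l) * (deriv P x / P x) ^ 2 := by
    have he : (∫ x in (0:ℝ)..l, (-f (x / l) (P x) * P x - F x * deriv P x) / P x ^ 2)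
        = (∫ x in (0:ℝ)..l, -(f (x / l) (P x) / P x))
          - ∫ x in (0:ℝ)..l, a (x / l) * (deriv P x / P x) ^ 2 := by
      rw [← integral_sub (f := fun x => -(f (x / l) (P x) / P x)) (hq_cont.neg.intervalIntegrable 0 l)
        (hw_cont.intervalIntegrable 0 l)]
      exact intervalIntegral.integral_congr fun x _ => hsplit x
    rw [he, intervalIntegral.integral_neg] at hint2
    linarith
  have hw_nonneg : 0 ≤ ∫ x in (0:ℝ)..l, a (x / l) * (deriv P x / P x) ^ 2 :=
    intervalIntegral.integral_nonneg hl.le fun x _ =>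
      mul_nonneg (le_trans hα₁.le (ha_lb _)) (sq_nonneg _)
  have hq_le : (∫ x in (0:ℝ)..l, f (x / l) (P x) / P x) ≤ 0 := by
    rw [hint2']; linarith
  have hcvq : (∫ x in (0:ℝ)..l, f (x / l) (P x) / P x)
      = l * ∫ y in (0:ℝ)..1, f y (P (l * y)) / P (l * y) := by
    rw [← hcv1 (fun y => f y (P (l * y)) / P (l * y))]
    apply intervalIntegral.integral_congr
    intro x _
    simp only [mul_comm l, div_mul_cancel₀ x hl']
  have hq1_le : (∫ y in (0:ℝ)..1, f y (P (l * y)) / P (l * y)) ≤ 0 := by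
    rw [hcvq] at hq_le
    by_contra h
    push_neg at h
    nlinarith
  -- comparison with f y r / r
  have hcomp : ∀ y ∈ Set.Icc (0:ℝ) 1, f y r / r ≤ f y (P (l * y)) / P (l * y) := by
    intro y _
    rcases eq_or_lt_of_le (hub (l * y)) with h | h
    · rw [h]
    · exact (hf_dec y (Set.mem_Ioi.2 (hPpos _)) (Set.mem_Ioi.2 hr_pos) h).le
  have hql_cont : Continuous fun y => f y (P (l * y)) / P (l * y) :=
    hcfl.div (hPc.comp (continuous_const.mul continuous_id)) fun y => (hPpos _).ne'
  have hmono := intervalIntegral.integral_mono_on (μ := MeasureTheory.volume) (by norm_num : (0:ℝ) ≤ 1)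
    (((hcfr r).div_const r).intervalIntegrable 0 1) (hql_cont.intervalIntegrable 0 1) hcomp
  have hgr_div : (∫ y in (0:ℝ)..1, f y r) / r ≤ 0 := by
    rw [← intervalIntegral.integral_div]
    exact le_trans hmono hq1_le
  have hgr_le : (∫ y in (0:ℝ)..1, f y r) ≤ 0 := by
    by_contra h
    push_neg at h
    have := div_pos h hr_pos
    linarith
  exact ⟨r, hr_pos, hr_M, hgr_le, hgr1, hub, hlb, hdPbd⟩

lemma exists_bounds (f : ℝ → ℝ → ℝ) (M : ℝ)
    (hf_C1 : ContDiff ℝ 1 (fun q : ℝ × ℝ => f q.1 q.2)) :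
    ∃ C Λ : ℝ, 0 ≤ C ∧ 0 ≤ Λ ∧
      (∀ y ∈ Set.Icc (0:ℝ) 1, ∀ s ∈ Set.Icc 0 M, |f y s| ≤ C) ∧
      (∀ y ∈ Set.Icc (0:ℝ) 1, ∀ s ∈ Set.Icc 0 M, ∀ t ∈ Set.Icc 0 M,
        |f y s - f y t| ≤ Λ * |s - t|) := by
  have hK : IsCompact (Set.Icc (0:ℝ) 1 ×ˢ Set.Icc (0:ℝ) M) :=
    isCompact_Icc.prod isCompact_Icc
  obtain ⟨C, hCbd⟩ := hK.exists_bound_of_continuousOn hf_C1.continuous.continuousOn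
  obtain ⟨Λ, hΛbd⟩ := hK.exists_bound_of_continuousOn
    (hf_C1.continuous_fderiv one_ne_zero).norm.continuousOn
  refine ⟨max C 0, max Λ 0, le_max_right _ _, le_max_right _ _, ?_, ?_⟩
  · intro y hy s hs
    exact le_trans (hCbd (y, s) (Set.mk_mem_prod hy hs)) (le_max_left _ _)
  · intro y hy s hs t ht
    have hderiv : ∀ u ∈ Set.Icc (0:ℝ) M, HasDerivWithinAt (fun s => f y s)
        ((fderiv ℝ (fun q : ℝ × ℝ => f q.1 q.2) (y, u)) ((0:ℝ), (1:ℝ)))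
        (Set.Icc 0 M) u := by
      intro u _
      have h1 := (hf_C1.differentiable one_ne_zero (y, u)).hasFDerivAt
      have h2 : HasDerivAt (fun u : ℝ => ((y, u) : ℝ × ℝ)) ((0:ℝ), (1:ℝ)) u :=
        (hasDerivAt_const u y).prodMk (hasDerivAt_id u)
      exact (h1.comp_hasDerivAt u h2).hasDerivWithinAt
    have hbound : ∀ u ∈ Set.Icc (0:ℝ) M,
        ‖(fderiv ℝ (fun q : ℝ × ℝ => f q.1 q.2) (y, u)) ((0:ℝ), (1:ℝ))‖ ≤ max Λ 0 := by
      intro u hu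
      have h1 := (fderiv ℝ (fun q : ℝ × ℝ => f q.1 q.2) (y, u)).le_opNorm ((0:ℝ), (1:ℝ))
      have h2 : ‖(((0:ℝ), (1:ℝ)) : ℝ × ℝ)‖ = 1 := by
        simp [Prod.norm_def]
      rw [h2, mul_one] at h1
      have h3 := hΛbd (y, u) (Set.mk_mem_prod hy hu)
      rw [norm_norm] at h3
      exact le_trans h1 (le_trans h3 (le_max_left _ _))
    have := Convex.norm_image_sub_le_of_norm_hasDerivWithin_le hderiv hbound
      (convex_Icc _ _) ht hs
    simpa [Real.norm_eq_abs] using this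


/-- Homogenization of the stationary states: if `Lₙ ∈ (0,1)`, `Lₙ → 0`
and `pₙ` are the stationary states, then `pₙ → p₀` (the unique positive zero of `g`)
uniformly on compacts, the Hölder seminorms of exponent `δ < 1/2` of `pₙ - p₀` on
compact intervals tend to `0`, and `∫ pₙ' φ → 0` for every smooth compactly
supported `φ` (weak `H¹_loc` convergence to the constant `p₀`). -/
theorem stationary_states_homogenize
    (a : ℝ → ℝ) (f : ℝ → ℝ → ℝ) (μ : ℝ → ℝ) (α₁ α₂ M p₀ : ℝ)
    (L : ℕ → ℝ) (p : ℕ → ℝ → ℝ)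
    (ha_C2 : ContDiff ℝ 2 a) (ha_per : ∀ x, a (x + 1) = a x)
    (hα₁ : 0 < α₁) (hα₁₂ : α₁ < α₂)
    (ha_lb : ∀ x, α₁ ≤ a x) (ha_ub : ∀ x, a x ≤ α₂)
    (hf_per : ∀ x s, f (x + 1) s = f x s)
    (hf_C1 : ContDiff ℝ 1 (fun q : ℝ × ℝ => f q.1 q.2))
    (hf_zero : ∀ x, f x 0 = 0)
    (hM : 0 ≤ M) (hf_M : ∀ x s, M ≤ s → f x s ≤ 0)
    (hf_dec : ∀ x, StrictAntiOn (fun s => f x s / s) (Set.Ioi 0))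
    (hμ_lim : ∀ x, Tendsto (fun s => f x s / s) (𝓝[>] (0:ℝ)) (𝓝 (μ x)))
    (hμ_pos : 0 < ∫ x in (0:ℝ)..1, μ x)
    (hp₀_pos : 0 < p₀) (hp₀_zero : (∫ x in (0:ℝ)..1, f x p₀) = 0)
    (hL : ∀ n, 0 < L n ∧ L n < 1)
    (hL0 : Tendsto L atTop (𝓝 0))
    (hp_C2 : ∀ n, ContDiff ℝ 2 (p n))
    (hp_pos : ∀ n x, 0 < p n x) (hp_le : ∀ n x, p n x ≤ M)
    (hp_per : ∀ n x, p n (x + L n) = p n x)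
    (hp_eq : ∀ n x,
      deriv (fun y => a (y / L n) * deriv (p n) y) x + f (x / L n) (p n x) = 0) :
    (∀ K : Set ℝ, IsCompact K →
      TendstoUniformlyOn (fun n x => p n x) (fun _ => p₀) atTop K) ∧
    (∀ δ : ℝ, 0 ≤ δ → δ < 1 / 2 → ∀ x₁ x₂ : ℝ, x₁ ≤ x₂ →
      Tendsto (fun n => sSup ((fun q : ℝ × ℝ =>
          |(p n q.1 - p₀) - (p n q.2 - p₀)| / |q.1 - q.2| ^ δ) ''
          {q : ℝ × ℝ | q.1 ∈ Set.Icc x₁ x₂ ∧ q.2 ∈ Set.Icc x₁ x₂ ∧ q.1 ≠ q.2}))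
        atTop (𝓝 0)) ∧
    (∀ φ : ℝ → ℝ, ContDiff ℝ (⊤ : ℕ∞) φ → HasCompactSupport φ →
      Tendsto (fun n => ∫ x : ℝ, deriv (p n) x * φ x) atTop (𝓝 0)) := by
  obtain ⟨C, Λ, hC0, hΛ0, hC, hΛ⟩ := exists_bounds f M hf_C1
  have hkey : ∀ n, ∃ r, 0 < r ∧ r ≤ M ∧ (∫ y in (0:ℝ)..1, f y r) ≤ 0 ∧
      |∫ y in (0:ℝ)..1, f y r| ≤ Λ * (C * L n / α₁ * L n) ∧
      (∀ x, p n x ≤ r) ∧ (∀ x, r - C * L n / α₁ * L n ≤ p n x) ∧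
      (∀ x, |deriv (p n) x| ≤ C * L n / α₁) := fun n =>
    key_estimates a f α₁ M C Λ ha_C2 hα₁ ha_lb ha_per hf_C1 hf_dec hC0 hΛ0 hC hΛ
      (L n) (hL n).1 (p n) (hp_C2 n) (hp_pos n) (hp_le n) (hp_per n) (hp_eq n)
  choose r hr_pos hr_M hgr_le hgr_bd hub hlb hdbd using hkey
  -- sign of g
  have hg_neg : ∀ s, p₀ < s → (∫ y in (0:ℝ)..1, f y s) < 0 := by
    intro s hs
    have h1 := g_strict f hf_C1 hf_dec hp₀_pos hs
    rw [hp₀_zero] at h1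
    by_contra h
    push_neg at h
    have := div_nonneg h (le_of_lt (hp₀_pos.trans hs))
    simp at h1
    linarith
  have hg_pos : ∀ s, 0 < s → s < p₀ → 0 < (∫ y in (0:ℝ)..1, f y s) := by
    intro s hs hlt
    have h1 := g_strict f hf_C1 hf_dec hs hlt
    rw [hp₀_zero] at h1
    by_contra h
    push_neg at h
    have := div_nonpos_of_nonpos_of_nonneg h hs.le
    simp at h1
    linarith
  have hr_ge : ∀ n, p₀ ≤ r n := by
    intro n
    by_contra h
    push_neg at h
    exact absurd (hgr_le n) (not_le.2 (hg_pos _ (hr_pos n) h))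
  -- limits of the small quantities
  have hKlim : Tendsto (fun n => C * L n / α₁) atTop (𝓝 0) := by
    have := (hL0.const_mul C).div_const α₁
    simpa using this
  have hεlim : Tendsto (fun n => C * L n / α₁ * L n) atTop (𝓝 0) := by
    have := hKlim.mul hL0
    simpa using this
  have hΛεlim : Tendsto (fun n => Λ * (C * L n / α₁ * L n)) atTop (𝓝 0) := by
    have := hεlim.const_mul Λ
    simpa using this
  -- eventual closeness of r n to p₀ from above
  have hr_ub_ev : ∀ η : ℝ, 0 < η → ∀ᶠ n in atTop, r n < p₀ + η := by
    intro η hη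
    by_cases hcase : M < p₀ + η
    · exact Filter.Eventually.of_forall fun n => lt_of_le_of_lt (hr_M n) hcase
    · push_neg at hcase
      have hgcont : ContinuousOn (fun s => ∫ y in (0:ℝ)..1, f y s)
          (Set.Icc (p₀ + η) M) := by
        apply LipschitzOnWith.continuousOn (K := Real.toNNReal Λ)
        apply LipschitzOnWith.of_dist_le_mul
        intro s hs t ht
        rw [Real.dist_eq, Real.dist_eq]
        have hsM : s ∈ Set.Icc (0:ℝ) M := ⟨by linarith [hs.1], hs.2⟩
        have htM : t ∈ Set.Icc (0:ℝ) M := ⟨by linarith [ht.1], ht.2⟩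
        have hbd : |(∫ y in (0:ℝ)..1, f y s) - ∫ y in (0:ℝ)..1, f y t| ≤ Λ * |s - t| := by
          have hcs : Continuous fun y => f y s :=
            hf_C1.continuous.comp (continuous_id.prodMk continuous_const)
          have hct : Continuous fun y => f y t :=
            hf_C1.continuous.comp (continuous_id.prodMk continuous_const)
          rw [← intervalIntegral.integral_sub (hcs.intervalIntegrable 0 1)
            (hct.intervalIntegrable 0 1), ← Real.norm_eq_abs]
          have hb := intervalIntegral.norm_integral_le_of_norm_le_const
            (C := Λ * |s - t|) (a := (0:ℝ)) (b := 1)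
            (f := fun y => f y s - f y t) ?_
          · simpa using hb
          · intro y hy
            have hy' : y ∈ Set.Icc (0:ℝ) 1 := by
              rcases Set.mem_uIoc.mp hy with h | h
              · exact ⟨h.1.le, h.2⟩
              · exact absurd (h.1.trans_le h.2) (by norm_num)
            simpa using hΛ y hy' s hsM t htM
        calc |(∫ y in (0:ℝ)..1, f y s) - ∫ y in (0:ℝ)..1, f y t| ≤ Λ * |s - t| := hbd
          _ ≤ (Real.toNNReal Λ : ℝ) * |s - t| := by
              rw [Real.coe_toNNReal Λ hΛ0]
      obtain ⟨sm, hsmmem, hsmmax⟩ := isCompact_Icc.exists_isMaxOn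
        (Set.nonempty_Icc.2 hcase) hgcont
      have hneg : (∫ y in (0:ℝ)..1, f y sm) < 0 := hg_neg _ (by linarith [hsmmem.1])
      have hev : ∀ᶠ n in atTop, Λ * (C * L n / α₁ * L n) < -(∫ y in (0:ℝ)..1, f y sm) :=
        hΛεlim.eventually_lt_const (by linarith)
      filter_upwards [hev] with n hn
      by_contra h
      push_neg at h
      have h1 : (∫ y in (0:ℝ)..1, f y (r n)) ≤ ∫ y in (0:ℝ)..1, f y sm :=
        hsmmax ⟨h, hr_M n⟩
      have h2 := (abs_le.mp (hgr_bd n)).1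
      linarith
  -- the main convergence estimate
  have hconv : ∀ η : ℝ, 0 < η → ∀ᶠ n in atTop,
      (∀ x, |p n x - p₀| < η) ∧ (∀ x, |deriv (p n) x| < η) := by
    intro η hη
    have h1 := hr_ub_ev (η / 2) (by linarith)
    have h2 : ∀ᶠ n in atTop, C * L n / α₁ * L n < η / 2 :=
      hεlim.eventually_lt_const (by linarith)
    have h3 : ∀ᶠ n in atTop, C * L n / α₁ < η :=
      hKlim.eventually_lt_const hη
    filter_upwards [h1, h2, h3] with n hn1 hn2 hn3
    refine ⟨fun x => ?_, fun x => lt_of_le_of_lt (hdbd n x) hn3⟩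
    rw [abs_lt]
    constructor
    · linarith [hlb n x, hr_ge n]
    · linarith [hub n x]
  have hpd : ∀ n, Differentiable ℝ (p n) := fun n =>
    (hp_C2 n).differentiable two_ne_zero
  refine ⟨?_, ?_, ?_⟩
  · -- uniform convergence on compacts
    intro K _
    rw [Metric.tendstoUniformlyOn_iff]
    intro η hη
    filter_upwards [hconv η hη] with n hn x _
    rw [Real.dist_eq, abs_sub_comm]
    exact hn.1 x
  · -- Hölder seminorms
    intro δ hδ0 hδh x₁ x₂ hx12
    have hR1 : (1:ℝ) ≤ max (x₂ - x₁) 1 := le_max_right _ _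
    have hR0 : (0:ℝ) < max (x₂ - x₁) 1 := by linarith
    set R := max (x₂ - x₁) 1 with hR_def
    rw [Metric.tendsto_atTop]
    intro η hη
    have hη' : 0 < η / (2 * R) := by positivity
    have := hconv (η / (2 * R)) hη'
    rw [eventually_atTop] at this
    obtain ⟨N, hN⟩ := this
    refine ⟨N, fun n hn => ?_⟩
    have hLipn : ∀ u v : ℝ, |p n u - p n v| ≤ η / (2 * R) * |u - v| := by
      intro u v
      have := Convex.norm_image_sub_le_of_norm_hasDerivWithin_le (s := Set.univ)
        (f := p n) (f' := deriv (p n))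
        (fun z _ => (hpd n z).hasDerivAt.hasDerivWithinAt)
        (fun z _ => ((hN n hn).2 z).le) convex_univ (Set.mem_univ v) (Set.mem_univ u)
      simpa [Real.norm_eq_abs] using this
    have hSle : ∀ b ∈ (fun q : ℝ × ℝ =>
        |(p n q.1 - p₀) - (p n q.2 - p₀)| / |q.1 - q.2| ^ δ) ''
        {q : ℝ × ℝ | q.1 ∈ Set.Icc x₁ x₂ ∧ q.2 ∈ Set.Icc x₁ x₂ ∧ q.1 ≠ q.2},
        b ≤ η / 2 := by
      rintro b ⟨q, ⟨hq1, hq2, hq3⟩, rfl⟩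
      have hΔpos : 0 < |q.1 - q.2| := abs_pos.2 (sub_ne_zero.2 hq3)
      have hΔR : |q.1 - q.2| ≤ R := by
        refine le_trans (abs_le.2 ⟨?_, ?_⟩) (le_max_left _ _)
        · linarith [hq1.1, hq2.2]
        · linarith [hq1.2, hq2.1]
      have hpow_pos : (0:ℝ) < |q.1 - q.2| ^ δ := Real.rpow_pos_of_pos hΔpos δ
      have hnum : |(p n q.1 - p₀) - (p n q.2 - p₀)| = |p n q.1 - p n q.2| := by
        ring_nf
      simp only [hnum]
      rw [div_le_iff₀ hpow_pos]
      have h6 : |q.1 - q.2| = |q.1 - q.2| ^ (1 - δ : ℝ) * |q.1 - q.2| ^ δ := by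
        rw [← Real.rpow_add hΔpos, sub_add_cancel, Real.rpow_one]
      have h5 : |q.1 - q.2| ^ (1 - δ : ℝ) ≤ R := by
        calc |q.1 - q.2| ^ (1 - δ : ℝ) ≤ R ^ (1 - δ : ℝ) :=
            Real.rpow_le_rpow (abs_nonneg _) hΔR (by linarith)
          _ ≤ R ^ (1 : ℝ) := Real.rpow_le_rpow_of_exponent_le hR1 (by linarith)
          _ = R := Real.rpow_one R
      calc |p n q.1 - p n q.2| ≤ η / (2 * R) * |q.1 - q.2| := hLipn _ _
        _ = η / (2 * R) * (|q.1 - q.2| ^ (1 - δ : ℝ) * |q.1 - q.2| ^ δ) := by rw [← h6]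
        _ ≤ η / (2 * R) * (R * |q.1 - q.2| ^ δ) := by
            apply mul_le_mul_of_nonneg_left _ hη'.le
            exact mul_le_mul_of_nonneg_right h5 hpow_pos.le
        _ = η / (2 * R) * R * |q.1 - q.2| ^ δ := by ring
        _ = η / 2 * |q.1 - q.2| ^ δ := by
            field_simp
    have h0 : 0 ≤ sSup ((fun q : ℝ × ℝ =>
        |(p n q.1 - p₀) - (p n q.2 - p₀)| / |q.1 - q.2| ^ δ) ''
        {q : ℝ × ℝ | q.1 ∈ Set.Icc x₁ x₂ ∧ q.2 ∈ Set.Icc x₁ x₂ ∧ q.1 ≠ q.2}) := by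
      apply Real.sSup_nonneg
      rintro b ⟨q, _, rfl⟩
      positivity
    have hle := Real.sSup_le hSle (by linarith)
    rw [Real.dist_eq, sub_zero, abs_of_nonneg h0]
    linarith
  · -- weak H¹ convergence
    intro φ hφ hφc
    have hφcont : Continuous φ := hφ.continuous
    have hφint : Integrable φ := hφcont.integrable_of_hasCompactSupport hφc
    have hI0 : (0:ℝ) ≤ ∫ x, |φ x| := integral_nonneg fun x => abs_nonneg _
    set I := ∫ x, |φ x| with hI_def
    rw [Metric.tendsto_atTop]
    intro η hη
    have hη' : 0 < η / (I + 1) := by positivity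
    have := hconv (η / (I + 1)) hη'
    rw [eventually_atTop] at this
    obtain ⟨N, hN⟩ := this
    refine ⟨N, fun n hn => ?_⟩
    rw [Real.dist_eq, sub_zero]
    have hdc : Continuous (deriv (p n)) := by
      have h2 := contDiff_succ_iff_deriv.mp (show ContDiff ℝ (1 + 1) (p n) by
        rw [one_add_one_eq_two]; exact hp_C2 n)
      exact h2.2.2.continuous
    have hint : Integrable (fun x => deriv (p n) x * φ x) :=
      (hdc.mul hφcont).integrable_of_hasCompactSupport (hφc.mul_left)
    calc |∫ x, deriv (p n) x * φ x| ≤ ∫ x, |deriv (p n) x * φ x| := by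
            have hb := MeasureTheory.norm_integral_le_integral_norm
              (μ := MeasureTheory.volume) (fun x => deriv (p n) x * φ x)
            simpa only [Real.norm_eq_abs] using hb
      _ ≤ ∫ x, η / (I + 1) * |φ x| := by
          apply integral_mono hint.abs (hφint.abs.const_mul _)
          intro x
          show |deriv (p n) x * φ x| ≤ η / (I + 1) * |φ x|
          rw [abs_mul]
          exact mul_le_mul_of_nonneg_right ((hN n hn).2 x).le (abs_nonneg _)
      _ = η / (I + 1) * I := by rw [MeasureTheory.integral_const_mul]
      _ < η := by
          rw [div_mul_eq_mul_div, div_lt_iff₀ (by linarith)]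
          nlinarith
end

section
/- Let c > 0, D > 0, let G : ℝ → ℝ be continuous, and let U : ℝ → ℝ be a bounded, nondecreasing, C² solution of c U'(s) = D U''(s) + G(U(s)) for all s ∈ ℝ. Then the limits U(-∞) := lim_{s→-∞} U(s) and U(+∞) := lim_{s→+∞} U(s) exist, U'(s) → 0 and U''(s) → 0 as s → ±∞, and G(U(-∞)) = G(U(+∞)) = 0. -/
/-!
The equation says that `D U' - c U` is an antiderivative of `-G ∘ U`. Along either end of the
line, `U` converges, so by the mean value theorem every unit window `[a, a + 1]` contains a
point `b a` with `U' (b a) = U (a + 1) - U a → 0`. Applying the mean value theorem to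
`D U' - c U` between `b a` and `b (a + 2)`, which are at least `1` apart, shows that `G ∘ U` is
small somewhere in `[a, a + 3]`, hence `G` vanishes at the limit of `U`. Applying it between `a`
and `b a` then gives `D U' a = D U' (b a) - c (U (b a) - U a) + o(1) → 0`, and `U'' → 0` is read
off the equation.
-/

open Filter Topology Set

lemma exists_mem_Ioo_sub_eq_mul {f f' : ℝ → ℝ} (hf : ∀ x, HasDerivAt f (f' x) x) {a b : ℝ}
    (hab : a < b) : ∃ ξ ∈ Ioo a b, f b - f a = f' ξ * (b - a) := by
  obtain ⟨ξ, hξ, h⟩ := exists_hasDerivAt_eq_slope f f' hab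
    (fun x _ => (hf x).continuousAt.continuousWithinAt) (fun x _ => hf x)
  exact ⟨ξ, hξ, by rw [h, div_mul_cancel₀ _ (sub_ne_zero.2 hab.ne')]⟩

lemma Filter.tendsto_of_forall_mem_Icc_add {l : Filter ℝ} [TendstoIxxClass Icc l l] {r : ℝ}
    (hr : Tendsto (· + r) l l) {ξ : ℝ → ℝ} (hξ : ∀ a, ξ a ∈ Icc a (a + r)) : Tendsto ξ l l :=
  (tendsto_id.Icc hr).of_smallSets (Eventually.of_forall hξ)

namespace TravellingWave

variable {l : Filter ℝ} [TendstoIxxClass Icc l l] {U W : ℝ → ℝ} {u c D : ℝ} {G : ℝ → ℝ}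

lemma exists_mem_Ioo_tendsto_deriv_comp_zero (hl : Tendsto (· + 1) l l)
    (hU : ∀ x, HasDerivAt U (W x) x) (hu : Tendsto U l (𝓝 u)) :
    ∃ b : ℝ → ℝ, (∀ a, b a ∈ Ioo a (a + 1)) ∧ Tendsto b l l ∧ Tendsto (W ∘ b) l (𝓝 0) := by
  choose b hb hUb using fun a => exists_mem_Ioo_sub_eq_mul hU (lt_add_one a)
  refine ⟨b, hb, tendsto_of_forall_mem_Icc_add hl fun a => Ioo_subset_Icc_self (hb a), ?_⟩
  have hinc : Tendsto (fun a => U (a + 1) - U a) l (𝓝 (u - u)) := (hu.comp hl).sub hu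
  rw [sub_self] at hinc
  exact hinc.congr fun a => by simp [hUb a]

lemma apply_limit_eq_zero [l.NeBot] (hl : ∀ r, Tendsto (· + r) l l)
    (hU : ∀ x, HasDerivAt U (W x) x)
    (hprim : ∀ x, HasDerivAt (fun s => D * W s - c * U s) (-G (U x)) x)
    (hu : Tendsto U l (𝓝 u)) (hG : ContinuousAt G u) : G u = 0 := by
  obtain ⟨b, hb, hbl, hWb⟩ := exists_mem_Ioo_tendsto_deriv_comp_zero (hl 1) hU hu
  have hgap : ∀ a, 1 < b (a + 2) - b a := fun a => by linarith [(hb a).2, (hb (a + 2)).1]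
  choose ξ hξ hprimξ using fun a =>
    exists_mem_Ioo_sub_eq_mul hprim (sub_pos.1 (one_pos.trans (hgap a)))
  have hξl : Tendsto ξ l l := tendsto_of_forall_mem_Icc_add (hl 3) fun a =>
    ⟨by linarith [(hb a).1, (hξ a).1], by linarith [(hb (a + 2)).2, (hξ a).2]⟩
  have hprimb : Tendsto (fun a => D * W (b a) - c * U (b a)) l (𝓝 (-(c * u))) := by
    simpa using (hWb.const_mul D).sub ((hu.comp hbl).const_mul c)
  have hosc : Tendsto (fun a => |(D * W (b (a + 2)) - c * U (b (a + 2))) -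
      (D * W (b a) - c * U (b a))|) l (𝓝 0) := by
    simpa using ((hprimb.comp (hl 2)).sub hprimb).abs
  have hGξ : Tendsto (fun a => G (U (ξ a))) l (𝓝 0) := by
    refine squeeze_zero_norm (fun a => ?_) hosc
    rw [hprimξ a, abs_mul, abs_neg, abs_of_pos (one_pos.trans (hgap a)), Real.norm_eq_abs]
    exact le_mul_of_one_le_right (abs_nonneg _) (hgap a).le
  exact tendsto_nhds_unique (hG.tendsto.comp (hu.comp hξl)) hGξ

lemma tendsto_deriv_zero (hl : Tendsto (· + 1) l l) (hD : D ≠ 0)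
    (hU : ∀ x, HasDerivAt U (W x) x)
    (hprim : ∀ x, HasDerivAt (fun s => D * W s - c * U s) (-G (U x)) x)
    (hu : Tendsto U l (𝓝 u)) (hGU : Tendsto (fun x => G (U x)) l (𝓝 0)) :
    Tendsto W l (𝓝 0) := by
  obtain ⟨b, hb, hbl, hWb⟩ := exists_mem_Ioo_tendsto_deriv_comp_zero hl hU hu
  choose η hη hprimη using fun a => exists_mem_Ioo_sub_eq_mul hprim (hb a).1
  have hηl : Tendsto η l l := tendsto_of_forall_mem_Icc_add hl fun a =>
    ⟨(hη a).1.le, ((hη a).2.trans (hb a).2).le⟩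
  have hrem : Tendsto (fun a => G (U (η a)) * (b a - a)) l (𝓝 0) := by
    refine squeeze_zero_norm (fun a => ?_) (by simpa using (hGU.comp hηl).norm)
    rw [norm_mul]
    refine mul_le_of_le_one_right (norm_nonneg _) ?_
    rw [Real.norm_eq_abs, abs_of_pos (sub_pos.2 (hb a).1)]
    linarith [(hb a).2]
  have hDW : Tendsto (fun a => D * W a) l (𝓝 0) := by
    have := ((((hWb.const_mul D).sub ((hu.comp hbl).const_mul c)).add
      (hu.const_mul c)).add hrem)
    simp only [mul_zero, zero_sub, neg_add_cancel, add_zero] at this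
    exact this.congr fun a => by simp only [Function.comp]; linarith [hprimη a]
  simpa [hD] using hDW.const_mul D⁻¹

theorem apply_eq_zero_and_tendsto_derivs [l.NeBot] (hl : ∀ r, Tendsto (· + r) l l) {W' : ℝ → ℝ}
    (hD : D ≠ 0) (hU : ∀ x, HasDerivAt U (W x) x) (hW : ∀ x, HasDerivAt W (W' x) x)
    (hode : ∀ x, c * W x = D * W' x + G (U x)) (hu : Tendsto U l (𝓝 u))
    (hG : ContinuousAt G u) : G u = 0 ∧ Tendsto W l (𝓝 0) ∧ Tendsto W' l (𝓝 0) := by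
  have hprim : ∀ x, HasDerivAt (fun s => D * W s - c * U s) (-G (U x)) x := fun x =>
    (((hW x).const_mul D).sub ((hU x).const_mul c)).congr_deriv (by linarith [hode x])
  have hGu := apply_limit_eq_zero hl hU hprim hu hG
  have hGU : Tendsto (fun x => G (U x)) l (𝓝 0) := hGu ▸ hG.tendsto.comp hu
  have hWl := tendsto_deriv_zero (hl 1) hD hU hprim hu hGU
  have hW' : W' = fun x => (c * W x - G (U x)) / D := funext fun x => by
    field_simp
    linarith [hode x]
  refine ⟨hGu, hWl, hW' ▸ ?_⟩
  simpa using ((hWl.const_mul c).sub hGU).div_const D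

end TravellingWave

theorem travelling_wave_ODE_limits_general
    (c D : ℝ) (G : ℝ → ℝ) (U : ℝ → ℝ)
    (hD : 0 < D) (hG : Continuous G)
    (hU_C2 : ContDiff ℝ 2 U)
    (hU_bdd : ∃ R : ℝ, ∀ s, |U s| ≤ R)
    (hU_mono : Monotone U)
    (hU_eq : ∀ s, c * deriv U s = D * deriv (deriv U) s + G (U s)) :
    ∃ Um Up : ℝ,
      Tendsto U atBot (𝓝 Um) ∧ Tendsto U atTop (𝓝 Up) ∧
      Tendsto (deriv U) atBot (𝓝 0) ∧ Tendsto (deriv U) atTop (𝓝 0) ∧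
      Tendsto (deriv (deriv U)) atBot (𝓝 0) ∧
      Tendsto (deriv (deriv U)) atTop (𝓝 0) ∧
      G Um = 0 ∧ G Up = 0 := by
  obtain ⟨R, hR⟩ := hU_bdd
  have hUbot := tendsto_atBot_ciInf hU_mono ⟨-R, by rintro _ ⟨s, rfl⟩; exact (abs_le.1 (hR s)).1⟩
  have hUtop := tendsto_atTop_ciSup hU_mono ⟨R, by rintro _ ⟨s, rfl⟩; exact (abs_le.1 (hR s)).2⟩
  have hU' x : HasDerivAt U (deriv U x) x := (hU_C2.differentiable two_ne_zero x).hasDerivAt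
  have hU'' x : HasDerivAt (deriv U) (deriv (deriv U) x) x :=
    (hU_C2.differentiable_deriv_two x).hasDerivAt
  obtain ⟨hGm, hWm, hW'm⟩ := TravellingWave.apply_eq_zero_and_tendsto_derivs
    (fun r => tendsto_atBot_add_const_right _ r tendsto_id) hD.ne' hU' hU'' hU_eq hUbot
    hG.continuousAt
  obtain ⟨hGp, hWp, hW'p⟩ := TravellingWave.apply_eq_zero_and_tendsto_derivs
    (fun r => tendsto_atTop_add_const_right _ r tendsto_id) hD.ne' hU' hU'' hU_eq hUtop
    hG.continuousAt
  exact ⟨_, _, hUbot, hUtop, hWm, hWp, hW'm, hW'p, hGm, hGp⟩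

/-- If `U` is a bounded, nondecreasing, `C²` solution of
`c U' = D U'' + G(U)` on `ℝ` with `c > 0`, `D > 0` and `G` continuous, then the
limits `U(±∞)` exist, `U' → 0` and `U'' → 0` at `±∞`, and `G(U(-∞)) = G(U(+∞)) = 0`. -/
theorem travelling_wave_ODE_limits
    (c D : ℝ) (G : ℝ → ℝ) (U : ℝ → ℝ)
    (hc : 0 < c) (hD : 0 < D) (hG : Continuous G)
    (hU_C2 : ContDiff ℝ 2 U)
    (hU_bdd : ∃ R : ℝ, ∀ s, |U s| ≤ R)
    (hU_mono : Monotone U)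
    (hU_eq : ∀ s, c * deriv U s = D * deriv (deriv U) s + G (U s)) :
    ∃ Um Up : ℝ,
      Tendsto U atBot (𝓝 Um) ∧ Tendsto U atTop (𝓝 Up) ∧
      Tendsto (deriv U) atBot (𝓝 0) ∧ Tendsto (deriv U) atTop (𝓝 0) ∧
      Tendsto (deriv (deriv U)) atBot (𝓝 0) ∧
      Tendsto (deriv (deriv U)) atTop (𝓝 0) ∧
      G Um = 0 ∧ G Up = 0 :=
  travelling_wave_ODE_limits_general c D G U hD hG hU_C2 hU_bdd hU_mono hU_eq
end
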